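/- arXiv:1802.08082 — 2 statements merged into one kernel-verified Lean document; each statement's English description precedes it below -/
import Mathlib

section
/- Let v_c ∈ 𝒦 and let f ∈ H¹(S). Write f = v_{cz} g, i.e. g := f / v_{cz} (well defined since v_{cz} > 0). Then E_ℓ(f) = ∫_S v_{cz}² |∇g|² dx; in particular E_ℓ(f) ≥ 0. -/
open MeasureTheory Real Filter Topology
open scoped ENNReal

noncomputable section

/-- Ambient model for the strip `S = Q × ℝ`, `Q = ℝ^{d-1}/ℤ^{d-1}`:
functions on `S` are modeled as `ℤ^{d-1}`-periodic functions on `ℝ^{d-1} × ℝ`. -/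
abbrev Spc (d : ℕ) : Type := (Fin (d - 1) → ℝ) × ℝ

/-- The `i`-th coordinate direction in `Spc d` (`i < d-1` are torus directions,
the last one is the `z` direction). -/
def dirv (d : ℕ) (i : Fin d) : Spc d :=
  if h : (i : ℕ) < d - 1 then (Pi.single (⟨i, h⟩ : Fin (d - 1)) 1, 0) else (0, 1)

/-- Partial derivative in the direction `i`. -/
def pd (d : ℕ) (i : Fin d) (f : Spc d → ℝ) (x : Spc d) : ℝ :=
  fderiv ℝ f x (dirv d i)

/-- Iterated partial derivative of order `j` with directions given by `α`. -/
def pdM (d : ℕ) {j : ℕ} (α : Fin j → Fin d) (f : Spc d → ℝ) (x : Spc d) : ℝ :=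
  iteratedFDeriv ℝ j f x (fun k => dirv d (α k))

/-- Squared (Euclidean) norm `|∇^j f|²(x)` of the full `j`-th derivative tensor. -/
def derivSq (d j : ℕ) (f : Spc d → ℝ) (x : Spc d) : ℝ :=
  ∑ α : Fin j → Fin d, (pdM d α f x) ^ 2

/-- The Laplacian. -/
def lap (d : ℕ) (f : Spc d → ℝ) (x : Spc d) : ℝ :=
  ∑ i : Fin d, pdM d (fun _ : Fin 2 => i) f x

/-- `ℤ^{d-1}`-periodicity in the torus directions. -/
def SPeriodic (d : ℕ) (f : Spc d → ℝ) : Prop :=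
  ∀ x : Spc d, ∀ i : Fin (d - 1), f (x + (Pi.single i 1, 0)) = f x

/-- Fundamental domain for the strip of torus sidelength `l`. -/
def sDomL (d : ℕ) (l : ℝ) : Set (Spc d) := {x | ∀ i, x.1 i ∈ Set.Ico (0 : ℝ) l}

/-- Fundamental domain for the strip `S` (sidelength `1`). -/
def sDom (d : ℕ) : Set (Spc d) := sDomL d 1

/-- Lebesgue measure on the strip. -/
def sMeas (d : ℕ) : Measure (Spc d) := volume.restrict (sDom d)

/-- Integral over the strip. -/
def sInt (d : ℕ) (f : Spc d → ℝ) : ℝ := ∫ x, f x ∂(sMeas d)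

/-- The double-well potential `G(u) = (1-u²)²/4` and its derivatives. -/
def Gpot (u : ℝ) : ℝ := (1 - u ^ 2) ^ 2 / 4
def Gp (u : ℝ) : ℝ := u ^ 3 - u
def Gpp (u : ℝ) : ℝ := 3 * u ^ 2 - 1

/-- The kink profile `v₀(z) = tanh (z/√2)`. -/
def v0 (z : ℝ) : ℝ := Real.tanh (z / Real.sqrt 2)

/-- The shifted kink `v_c` on the strip. -/
def kink (d : ℕ) (c : ℝ) (x : Spc d) : ℝ := v0 (x.2 - c)

/-- `v_{cz} = ∂_z v_c`. -/
def kinkz (d : ℕ) (c : ℝ) (x : Spc d) : ℝ := deriv v0 (x.2 - c)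

/-- `f_c = u - v_c`. -/
def fck (d : ℕ) (c : ℝ) (u : Spc d → ℝ) : Spc d → ℝ := fun x => u x - kink d c x

/-- The energy `E(u) = ∫_S ½|∇u|² + G(u)`. -/
def En (d : ℕ) (u : Spc d → ℝ) : ℝ :=
  sInt d (fun x => (1 / 2) * derivSq d 1 u x + Gpot (u x))

/-- The energy density of `u` is integrable (`E(u) < ∞`). -/
def FiniteEnergy (d : ℕ) (u : Spc d → ℝ) : Prop :=
  Integrable (fun x => (1 / 2) * derivSq d 1 u x + Gpot (u x)) (sMeas d)

/-- `m₀ = ∫_{-1}^1 √(2G(s)) ds`. -/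
def m0 : ℝ := ∫ s in (-1 : ℝ)..(1 : ℝ), Real.sqrt (2 * Gpot s)

/-- The energy gap `𝓔(u) = E(u) - m₀`. -/
def EGap (d : ℕ) (u : Spc d → ℝ) : ℝ := En d u - m0

/-- The dissipation `D(u) = ∫_S |∇(Δu - G'(u))|²`. -/
def Diss (d : ℕ) (u : Spc d → ℝ) : ℝ :=
  sInt d (derivSq d 1 (fun y => lap d u y - Gp (u y)))

/-- Membership in the Sobolev space `H^k(S)`. -/
def MemHk (d k : ℕ) (f : Spc d → ℝ) : Prop :=
  ContDiff ℝ (k : ℕ∞) f ∧ ∀ j ≤ k, Integrable (derivSq d j f) (sMeas d)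

/-- `f ∈ L^∞(S)`. -/
def BddS (d : ℕ) (f : Spc d → ℝ) : Prop := ∃ M : ℝ, ∀ x, |f x| ≤ M

/-- `v_c` is an `L²`-closest kink to `u`. -/
def IsClosestKink (d : ℕ) (u : Spc d → ℝ) (c : ℝ) : Prop :=
  ∀ c' : ℝ, sInt d (fun x => (u x - kink d c x) ^ 2) ≤
    sInt d (fun x => (u x - kink d c' x) ^ 2)

/-- Smooth periodic test functions with support bounded in the `z` direction. -/
def IsTest (d : ℕ) (φ : Spc d → ℝ) : Prop :=
  ContDiff ℝ (⊤ : ℕ∞) φ ∧ SPeriodic d φ ∧ ∃ R : ℝ, ∀ x : Spc d, R ≤ |x.2| → φ x = 0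

/-- `div F = g` distributionally on `S`. -/
def DivEq (d : ℕ) (F : Fin d → Spc d → ℝ) (g : Spc d → ℝ) : Prop :=
  ∀ φ : Spc d → ℝ, IsTest d φ →
    sInt d (fun x => ∑ i, F i x * pd d i φ x) = - sInt d (fun x => g x * φ x)

/-- The squared `Ḣ⁻¹` distance
`H = inf {∫_S |F|² : F ∈ L²(S;ℝ^d), div F = u - v}` (`= ∞` if no such `F`). -/
def Hdist (d : ℕ) (u v : Spc d → ℝ) : ℝ≥0∞ :=
  ⨅ (F : Fin d → Spc d → ℝ) (_ : (∀ i, MemLp (F i) 2 (sMeas d)) ∧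
      (∀ i, SPeriodic d (F i)) ∧ DivEq d F (fun x => u x - v x)),
    ENNReal.ofReal (sInt d (fun x => ∑ i, (F i x) ^ 2))

/-- `u` solves the Cahn–Hilliard equation `∂_t u = Δ(G'(u) - Δu)` at the times in `I`. -/
def IsCH (d : ℕ) (u : ℝ → Spc d → ℝ) (I : Set ℝ) : Prop :=
  ∀ t ∈ I, ∀ x : Spc d,
    HasDerivAt (fun s => u s x) (lap d (fun y => Gp (u t y) - lap d (u t) y) x) t

/-- Squared `H¹(S)` norm. -/
def H1normSq (d : ℕ) (f : Spc d → ℝ) : ℝ :=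
  sInt d (fun x => derivSq d 0 f x + derivSq d 1 f x)

/-- The linearized energy gap `E_ℓ(f) = ∫_S |∇f|² + G''(v_c) f²`. -/
def Elin (d : ℕ) (c : ℝ) (f : Spc d → ℝ) : ℝ :=
  sInt d (fun x => derivSq d 1 f x + Gpp (kink d c x) * f x ^ 2)

/-- The linearized dissipation `D_ℓ(f) = ∫_S |∇(-Δf + G''(v_c) f)|²`. -/
def Dlin (d : ℕ) (c : ℝ) (f : Spc d → ℝ) : ℝ :=
  sInt d (derivSq d 1 (fun x => -lap d f x + Gpp (kink d c x) * f x))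

end
section Helpers
variable {d : ℕ}

lemma derivSq_zero (f : Spc d → ℝ) (x : Spc d) : derivSq d 0 f x = f x ^ 2 := by
  rw [derivSq, Fintype.sum_unique]
  simp [pdM, iteratedFDeriv_zero_apply]

lemma derivSq_one (f : Spc d → ℝ) (x : Spc d) :
    derivSq d 1 f x = ∑ i : Fin d, (pd d i f x) ^ 2 := by
  rw [derivSq]
  apply Fintype.sum_equiv (Equiv.funUnique (Fin 1) (Fin d))
  intro α
  simp [pdM, pd, iteratedFDeriv_one_apply, Equiv.funUnique]

lemma tanh_sq_lt_one (x : ℝ) : Real.tanh x ^ 2 < 1 := by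
  rw [Real.tanh_eq_sinh_div_cosh, div_pow, div_lt_one (pow_pos (Real.cosh_pos x) 2)]
  nlinarith [Real.cosh_sq x]

lemma hasDerivAt_tanh (x : ℝ) : HasDerivAt Real.tanh (1 - Real.tanh x ^ 2) x := by
  have h : Real.tanh = fun x => Real.sinh x / Real.cosh x :=
    funext fun x => Real.tanh_eq_sinh_div_cosh x
  rw [h]
  have := (Real.hasDerivAt_sinh x).div (Real.hasDerivAt_cosh x) (Real.cosh_pos x).ne'
  refine this.congr_deriv ?_
  have hc := (Real.cosh_pos x).ne'
  beta_reduce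
  field_simp [Real.tanh_eq_sinh_div_cosh]

lemma v0_sq_lt_one (t : ℝ) : v0 t ^ 2 < 1 := _root_.tanh_sq_lt_one _

lemma hasDerivAt_v0 (t : ℝ) : HasDerivAt v0 ((1 - v0 t ^ 2) / Real.sqrt 2) t := by
  have h1 : HasDerivAt (fun z : ℝ => z / Real.sqrt 2) (1 / Real.sqrt 2) t := by
    simpa using (hasDerivAt_id t).div_const (Real.sqrt 2)
  have := (hasDerivAt_tanh (t / Real.sqrt 2)).comp t h1
  refine this.congr_deriv ?_
  simp [v0, div_eq_mul_inv]

lemma deriv_v0_eq : deriv v0 = fun t => (1 - v0 t ^ 2) / Real.sqrt 2 :=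
  funext fun t => (hasDerivAt_v0 t).deriv

lemma deriv_v0_pos (t : ℝ) : 0 < deriv v0 t := by
  rw [deriv_v0_eq]
  have h := v0_sq_lt_one t
  have h0 : 0 < 1 - v0 t ^ 2 := by linarith
  positivity

lemma hasDerivAt_deriv_v0 (t : ℝ) :
    HasDerivAt (deriv v0) (-Real.sqrt 2 * v0 t * deriv v0 t) t := by
  rw [deriv_v0_eq]
  have h := ((hasDerivAt_v0 t).pow 2).const_sub 1 |>.div_const (Real.sqrt 2)
  refine h.congr_deriv ?_
  have h2 : (Real.sqrt 2 : ℝ) ≠ 0 := by positivity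
  have hs : Real.sqrt 2 * Real.sqrt 2 = 2 := Real.mul_self_sqrt (by norm_num)
  beta_reduce
  norm_num
  field_simp
  ring_nf
  rw [Real.sq_sqrt (by norm_num : (0:ℝ) ≤ 2)]

lemma kinkz_pos (c : ℝ) (x : Spc d) : 0 < kinkz d c x := deriv_v0_pos _

lemma hasFDerivAt_kinkz (c : ℝ) (x : Spc d) :
    HasFDerivAt (kinkz d c)
      ((-Real.sqrt 2 * v0 (x.2 - c) * kinkz d c x) •
        (ContinuousLinearMap.snd ℝ (Fin (d - 1) → ℝ) ℝ)) x := by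
  have hsub : HasFDerivAt (fun y : Spc d => y.2 - c)
      (ContinuousLinearMap.snd ℝ (Fin (d - 1) → ℝ) ℝ) x :=
    (hasFDerivAt_snd).sub_const c
  exact (hasDerivAt_deriv_v0 (x.2 - c)).comp_hasFDerivAt x hsub

lemma pd_g (c : ℝ) (f : Spc d → ℝ) (x : Spc d) (hfd : DifferentiableAt ℝ f x) (i : Fin d) :
    pd d i (fun y => f y / kinkz d c y) x
      = (kinkz d c x)⁻¹ * pd d i f x +
        (Real.sqrt 2 * v0 (x.2 - c) * f x / kinkz d c x) * (dirv d i).2 := by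
  have hA : kinkz d c x ≠ 0 := (kinkz_pos c x).ne'
  have hinv : HasFDerivAt (fun y => (kinkz d c y)⁻¹)
      ((-(kinkz d c x ^ 2)⁻¹) • ((-Real.sqrt 2 * v0 (x.2 - c) * kinkz d c x) •
        (ContinuousLinearMap.snd ℝ (Fin (d - 1) → ℝ) ℝ))) x :=
    (hasDerivAt_inv hA).comp_hasFDerivAt x (hasFDerivAt_kinkz c x)
  have hmul := hfd.hasFDerivAt.mul hinv
  have heq : (fun y => f y / kinkz d c y) = f * fun y => (kinkz d c y)⁻¹ :=
    funext fun y => div_eq_mul_inv _ _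
  rw [pd, heq, hmul.fderiv]
  simp only [ContinuousLinearMap.add_apply, ContinuousLinearMap.coe_smul', Pi.smul_apply,
    ContinuousLinearMap.coe_snd', smul_eq_mul]
  rw [show pd d i f x = fderiv ℝ f x (dirv d i) from rfl]
  field_simp
  ring

end Helpers

section Helpers2
variable {d : ℕ}

lemma dirv_i0_snd (hd : 1 ≤ d) :
    (dirv d ⟨d - 1, Nat.sub_lt hd one_pos⟩).2 = 1 := by
  rw [dirv, dif_neg (by simp)]

lemma dirv_ne_snd (hd : 1 ≤ d) (i : Fin d) (h : i ≠ ⟨d - 1, Nat.sub_lt hd one_pos⟩) :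
    (dirv d i).2 = 0 := by
  have hne : (i : ℕ) ≠ d - 1 := fun hh => h (Fin.ext hh)
  have hlt : (i : ℕ) < d - 1 := by have := i.isLt; omega
  rw [dirv, dif_pos hlt]

lemma key_pointwise (hd : 1 ≤ d) (c : ℝ) (f : Spc d → ℝ) (x : Spc d)
    (hfd : DifferentiableAt ℝ f x) :
    derivSq d 1 f x + Gpp (kink d c x) * f x ^ 2 =
      kinkz d c x ^ 2 * derivSq d 1 (fun y => f y / kinkz d c y) x +
      ((v0 (x.2 - c) ^ 2 - 1) * f x ^ 2 +
        2 * (-Real.sqrt 2 * v0 (x.2 - c)) * f x *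
          pd d ⟨d - 1, Nat.sub_lt hd one_pos⟩ f x) := by
  have hA : kinkz d c x ≠ 0 := (kinkz_pos c x).ne'
  have h2 : Real.sqrt 2 * Real.sqrt 2 = 2 := Real.mul_self_sqrt (by norm_num)
  set i0 : Fin d := ⟨d - 1, Nat.sub_lt hd one_pos⟩ with hi0
  set u := v0 (x.2 - c) with hu
  have hsum : kinkz d c x ^ 2 * derivSq d 1 (fun y => f y / kinkz d c y) x
      = (∑ i : Fin d, (pd d i f x) ^ 2) +
        (2 * (Real.sqrt 2 * u * f x) * pd d i0 f x + 2 * u ^ 2 * f x ^ 2) := by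
    rw [derivSq_one, Finset.mul_sum]
    have hterm : ∀ i : Fin d,
        kinkz d c x ^ 2 * pd d i (fun y => f y / kinkz d c y) x ^ 2
        = (pd d i f x) ^ 2 + (if i = i0 then
            (2 * (Real.sqrt 2 * u * f x) * pd d i0 f x + 2 * u ^ 2 * f x ^ 2) else 0) := by
      intro i
      rw [pd_g c f x hfd]
      by_cases h : i = i0
      · subst h
        rw [if_pos rfl, dirv_i0_snd hd]
        field_simp
        ring_nf
        rw [Real.sq_sqrt (by norm_num : (0:ℝ) ≤ 2)]
        ring
      · rw [if_neg h, dirv_ne_snd hd i h]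
        field_simp
        ring
    rw [Finset.sum_congr rfl (fun i _ => hterm i), Finset.sum_add_distrib,
      Finset.sum_ite_eq' Finset.univ i0]
    simp
  rw [hsum, derivSq_one]
  have hk : Gpp (kink d c x) = 3 * u ^ 2 - 1 := rfl
  rw [hk]
  ring

end Helpers2

section IntZero

lemma limit_zero_of_integrable_atTop {h : ℝ → ℝ} {L : ℝ}
    (hi : Integrable h) (ht : Tendsto h atTop (𝓝 L)) : L = 0 := by
  by_contra hL
  have habs : Tendsto (fun z => |h z|) atTop (𝓝 |L|) := ht.abs
  have hev : ∀ᶠ z in atTop, |L| / 2 ≤ |h z| :=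
    habs.eventually (eventually_ge_nhds (by have := abs_pos.mpr hL; linarith))
  obtain ⟨R, hR⟩ := hev.exists_forall_of_atTop
  have hconst : Integrable (fun _ : ℝ => |L| / 2) (volume.restrict (Set.Ioi R)) := by
    apply Integrable.mono (hi.restrict (s := Set.Ioi R)) aestronglyMeasurable_const
    rw [ae_restrict_iff' measurableSet_Ioi]
    filter_upwards with z hz
    simpa [abs_of_nonneg (by positivity : (0:ℝ) ≤ |L|/2)] using hR z hz.le
  rw [integrable_const_iff] at hconst
  rcases hconst with h0 | hfin
  · have : |L| = 0 := by linarith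
    exact hL (abs_eq_zero.mp this)
  · have hfin := hfin.measure_univ_lt_top
    simp [Measure.restrict_apply_univ] at hfin

lemma limit_zero_of_integrable_atBot {h : ℝ → ℝ} {L : ℝ}
    (hi : Integrable h) (ht : Tendsto h atBot (𝓝 L)) : L = 0 := by
  have hi' : Integrable (h ∘ (fun z : ℝ => -z)) :=
    ((Measure.measurePreserving_neg (volume : Measure ℝ)).integrable_comp_emb
      (MeasurableEquiv.neg ℝ).measurableEmbedding).mpr hi
  exact limit_zero_of_integrable_atTop hi' (ht.comp tendsto_neg_atTop_atBot)

lemma integral_deriv_eq_zero {h h' : ℝ → ℝ}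
    (hd : ∀ z, HasDerivAt h (h' z) z) (hi : Integrable h) (hi' : Integrable h') :
    ∫ z, h' z = 0 := by
  have hsub : ∀ a b : ℝ, ∫ z in a..b, h' z = h b - h a := fun a b =>
    intervalIntegral.integral_eq_sub_of_hasDerivAt (fun z _ => hd z) hi'.intervalIntegrable
  have htop : Tendsto (fun R => ∫ z in (0:ℝ)..R, h' z) atTop (𝓝 (∫ z in Set.Ioi 0, h' z)) :=
    intervalIntegral_tendsto_integral_Ioi 0 hi'.integrableOn tendsto_id
  have hbot : Tendsto (fun R => ∫ z in R..(0:ℝ), h' z) atBot (𝓝 (∫ z in Set.Iic 0, h' z)) :=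
    intervalIntegral_tendsto_integral_Iic 0 hi'.integrableOn tendsto_id
  have htop' : Tendsto h atTop (𝓝 ((∫ z in Set.Ioi 0, h' z) + h 0)) :=
    (htop.add_const (h 0)).congr (fun R => by rw [hsub]; ring)
  have hbot' : Tendsto h atBot (𝓝 (h 0 - ∫ z in Set.Iic 0, h' z)) :=
    (hbot.const_sub (h 0)).congr (fun R => by rw [hsub]; ring)
  have hT := limit_zero_of_integrable_atTop hi htop'
  have hB := limit_zero_of_integrable_atBot hi hbot'
  have := intervalIntegral.integral_Iic_add_Ioi (f := h') (b := 0)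
    hi'.integrableOn hi'.integrableOn
  rw [← this]
  linarith

end IntZero

section Fubini

lemma sMeas_eq_prod (d : ℕ) :
    sMeas d = (volume.restrict (Set.univ.pi (fun _ : Fin (d-1) => Set.Ico (0:ℝ) 1))).prod
      (volume : Measure ℝ) := by
  have hdom : sDom d = (Set.univ.pi (fun _ : Fin (d-1) => Set.Ico (0:ℝ) 1)) ×ˢ Set.univ := by
    ext x
    simp [sDom, sDomL, Set.mem_pi]
  rw [sMeas, hdom, Measure.volume_eq_prod, ← Measure.prod_restrict, Measure.restrict_univ]

lemma sInt_deriv_zero (d : ℕ) (W P : Spc d → ℝ)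
    (hWP : ∀ (x' : Fin (d-1) → ℝ) (z : ℝ), HasDerivAt (fun t => W (x', t)) (P (x', z)) z)
    (hWi : Integrable W (sMeas d)) (hPi : Integrable P (sMeas d)) : sInt d P = 0 := by
  rw [sMeas_eq_prod] at hWi hPi
  rw [sInt, sMeas_eq_prod, MeasureTheory.integral_prod _ hPi]
  apply integral_eq_zero_of_ae
  filter_upwards [hPi.prod_right_ae, hWi.prod_right_ae] with x' h1 h2
  exact integral_deriv_eq_zero (fun z => hWP x' z) h2 h1

end Fubini

lemma derivSq_nonneg (d j : ℕ) (f : Spc d → ℝ) (x : Spc d) : 0 ≤ derivSq d j f x :=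
  Finset.sum_nonneg fun _ _ => sq_nonneg _

lemma continuous_v0 : Continuous v0 := by
  have h : Differentiable ℝ v0 := fun t => (hasDerivAt_v0 t).differentiableAt
  exact h.continuous

lemma dirv_i0 (d : ℕ) (hd : 1 ≤ d) :
    dirv d ⟨d - 1, Nat.sub_lt hd one_pos⟩ = (0, 1) := by
  rw [dirv, dif_neg (by simp)]

/-- Lemma 3.3 (Lassoued–Mironescu trick): writing `f = v_{cz} g`,
`E_ℓ(f) = ∫_S v_{cz}² |∇g|² ≥ 0`. -/
theorem lassoued_mironescu (d : ℕ) (hd : 1 ≤ d) (c : ℝ) (f : Spc d → ℝ)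
    (hper : SPeriodic d f) (hf : MemHk d 1 f) :
    Elin d c f =
      sInt d (fun x => (kinkz d c x) ^ 2 * derivSq d 1 (fun y => f y / kinkz d c y) x) ∧
    0 ≤ Elin d c f := by
  have hC1 : ContDiff ℝ 1 f := by exact_mod_cast hf.1
  have hfd : ∀ x, DifferentiableAt ℝ f x := fun x => (hC1.differentiable one_ne_zero).differentiableAt
  have hfc : Continuous f := hC1.continuous
  set i0 : Fin d := ⟨d - 1, Nat.sub_lt hd one_pos⟩ with hi0
  have hpc : Continuous (pd d i0 f) := by
    have := hC1.continuous_fderiv one_ne_zero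
    exact this.clm_apply continuous_const
  have hv0c : Continuous (fun x : Spc d => v0 (x.2 - c)) :=
    continuous_v0.comp (continuous_snd.sub continuous_const)
  -- integrability of f² and |∇f|²
  have hint1 : Integrable (derivSq d 1 f) (sMeas d) := hf.2 1 le_rfl
  have hint0 : Integrable (fun x => f x ^ 2) (sMeas d) := by
    have := hf.2 0 (by norm_num)
    simpa [funext fun x => derivSq_zero f x] using this
  -- the divergence term
  set P : Spc d → ℝ := fun x =>
    (v0 (x.2 - c) ^ 2 - 1) * f x ^ 2 +
      2 * (-Real.sqrt 2 * v0 (x.2 - c)) * f x * pd d i0 f x with hP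
  set W : Spc d → ℝ := fun x => -Real.sqrt 2 * v0 (x.2 - c) * f x ^ 2 with hW
  have hs2 : (Real.sqrt 2 : ℝ) ≠ 0 := by positivity
  have hsle : Real.sqrt 2 ≤ 1.5 := by
    nlinarith [Real.sq_sqrt (by norm_num : (0:ℝ) ≤ 2), Real.sqrt_nonneg 2]
  have hpsq : ∀ x, (pd d i0 f x) ^ 2 ≤ derivSq d 1 f x := fun x => by
    rw [derivSq_one]
    exact Finset.single_le_sum (f := fun i => (pd d i f x) ^ 2)
      (fun i _ => sq_nonneg _) (Finset.mem_univ i0)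
  have hu1 : ∀ x : Spc d, |v0 (x.2 - c)| ≤ 1 := fun x => by
    nlinarith [v0_sq_lt_one (x.2 - c), abs_nonneg (v0 (x.2 - c)), sq_abs (v0 (x.2 - c))]
  have hPc : Continuous P := by
    apply Continuous.add
    · exact ((hv0c.pow 2).sub continuous_const).mul (hfc.pow 2)
    · exact ((continuous_const.mul (continuous_const.mul hv0c)).mul hfc).mul hpc
  have hWc : Continuous W := (continuous_const.mul hv0c).mul (hfc.pow 2)
  have hPint : Integrable P (sMeas d) := by
    apply Integrable.mono' ((hint0.add hint1).const_mul 3)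
      hPc.aestronglyMeasurable
    filter_upwards with x
    have h1 := hpsq x
    have h3 := hu1 x
    have hf2 : (0:ℝ) ≤ f x ^ 2 := sq_nonneg _
    have hds : (0:ℝ) ≤ derivSq d 1 f x := derivSq_nonneg _ _ _ _
    have hprod : (0:ℝ) ≤ |f x| * |pd d i0 f x| := by positivity
    have e0 : |(v0 (x.2 - c) ^ 2 - 1) * f x ^ 2| = |v0 (x.2 - c) ^ 2 - 1| * f x ^ 2 := by
      rw [abs_mul, abs_of_nonneg hf2]
    have e1 : |2 * (-Real.sqrt 2 * v0 (x.2 - c)) * f x * pd d i0 f x| =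
        2 * Real.sqrt 2 * |v0 (x.2 - c)| * (|f x| * |pd d i0 f x|) := by
      simp only [abs_mul, abs_neg, abs_two, abs_of_nonneg (Real.sqrt_nonneg 2)]
      ring
    have hb : |P x| ≤ |v0 (x.2 - c) ^ 2 - 1| * f x ^ 2 +
        2 * Real.sqrt 2 * |v0 (x.2 - c)| * (|f x| * |pd d i0 f x|) := by
      rw [hP]
      refine (abs_add_le _ _).trans ?_
      rw [e0, e1]
    have h4 : |v0 (x.2 - c) ^ 2 - 1| ≤ 1 := by
      have h2a := v0_sq_lt_one (x.2 - c)
      have h2b := sq_nonneg (v0 (x.2 - c))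
      rw [abs_sub_comm, abs_of_nonneg (by linarith)]
      linarith
    have h5 : 2 * (|f x| * |pd d i0 f x|) ≤ f x ^ 2 + (pd d i0 f x) ^ 2 := by
      nlinarith [sq_nonneg (|f x| - |pd d i0 f x|), sq_abs (f x), sq_abs (pd d i0 f x)]
    have h7 : 2 * Real.sqrt 2 * |v0 (x.2 - c)| ≤ 3 := by
      nlinarith [Real.sqrt_nonneg 2, abs_nonneg (v0 (x.2 - c))]
    have h8 : 2 * Real.sqrt 2 * |v0 (x.2 - c)| * (|f x| * |pd d i0 f x|) ≤
        3 * (|f x| * |pd d i0 f x|) := mul_le_mul_of_nonneg_right h7 hprod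
    rw [Real.norm_eq_abs]
    simp only [Pi.add_apply]
    linarith [mul_le_mul_of_nonneg_right h4 hf2]
  have hWint : Integrable W (sMeas d) := by
    apply Integrable.mono' (hint0.const_mul 2) hWc.aestronglyMeasurable
    filter_upwards with x
    have h3 := hu1 x
    have hf2 : (0:ℝ) ≤ f x ^ 2 := sq_nonneg _
    rw [Real.norm_eq_abs, hW]
    have e1 : |-Real.sqrt 2 * v0 (x.2 - c) * f x ^ 2| =
        Real.sqrt 2 * |v0 (x.2 - c)| * f x ^ 2 := by
      rw [abs_mul, abs_mul, abs_neg, abs_of_nonneg (Real.sqrt_nonneg 2), abs_of_nonneg hf2]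
    rw [e1]
    have h7 : Real.sqrt 2 * |v0 (x.2 - c)| ≤ 2 := by
      nlinarith [Real.sqrt_nonneg 2, abs_nonneg (v0 (x.2 - c))]
    nlinarith [mul_le_mul_of_nonneg_right h7 hf2]
  -- slice derivative of W is P
  have hWP : ∀ (x' : Fin (d-1) → ℝ) (z : ℝ),
      HasDerivAt (fun t => W (x', t)) (P (x', z)) z := by
    intro x' z
    have hv : HasDerivAt (fun t : ℝ => v0 (t - c)) ((1 - v0 (z - c) ^ 2) / Real.sqrt 2) z := by
      have := (hasDerivAt_v0 (z - c)).comp z ((hasDerivAt_id z).sub_const c)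
      rw [mul_one] at this
      exact this
    have hcurve : HasDerivAt (fun t : ℝ => ((x', t) : Spc d)) (0, 1) z :=
      (hasDerivAt_const z x').prodMk (hasDerivAt_id z)
    have hfz : HasDerivAt (fun t => f (x', t)) (pd d i0 f (x', z)) z := by
      have := (hfd (x', z)).hasFDerivAt.comp_hasDerivAt z hcurve
      rw [show pd d i0 f (x', z) = fderiv ℝ f (x', z) (dirv d i0) from rfl, dirv_i0 d hd]
      exact this
    have h1 : HasDerivAt (fun t : ℝ => -Real.sqrt 2 * v0 (t - c))
        (-Real.sqrt 2 * ((1 - v0 (z - c) ^ 2) / Real.sqrt 2)) z := hv.const_mul _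
    have h2 : HasDerivAt (fun t => f (x', t) ^ 2)
        (2 * f (x', z) * pd d i0 f (x', z)) z := by
      refine (hfz.pow 2).congr_deriv ?_
      norm_num
    have := h1.mul h2
    refine this.congr_deriv ?_
    rw [hP]
    field_simp
    ring
  have hPzero : sInt d P = 0 := sInt_deriv_zero d W P hWP hWint hPint
  -- Elin integrand integrable
  have hGc : Continuous (fun x : Spc d => Gpp (kink d c x) * f x ^ 2) := by
    have : (fun x : Spc d => Gpp (kink d c x)) = fun x => 3 * v0 (x.2 - c) ^ 2 - 1 := rfl
    exact ((continuous_const.mul (hv0c.pow 2)).sub continuous_const).mul (hfc.pow 2)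
  have hGint : Integrable (fun x => Gpp (kink d c x) * f x ^ 2) (sMeas d) := by
    apply Integrable.mono' (hint0.const_mul 4) hGc.aestronglyMeasurable
    filter_upwards with x
    have h2 := v0_sq_lt_one (x.2 - c)
    have h2' := sq_nonneg (v0 (x.2 - c))
    have hk : Gpp (kink d c x) = 3 * v0 (x.2 - c) ^ 2 - 1 := rfl
    have habs : ‖Gpp (kink d c x) * f x ^ 2‖ = |Gpp (kink d c x)| * f x ^ 2 := by
      rw [Real.norm_eq_abs, abs_mul, abs_of_nonneg (sq_nonneg (f x))]
    rw [habs, hk]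
    have : |3 * v0 (x.2 - c) ^ 2 - 1| ≤ 4 := by
      rw [abs_le]; constructor <;> nlinarith
    nlinarith [sq_nonneg (f x)]
  have hE1int : Integrable (fun x => derivSq d 1 f x + Gpp (kink d c x) * f x ^ 2) (sMeas d) :=
    hint1.add hGint
  -- the key rewriting
  have hfun : (fun x => (kinkz d c x) ^ 2 * derivSq d 1 (fun y => f y / kinkz d c y) x) =
      fun x => (derivSq d 1 f x + Gpp (kink d c x) * f x ^ 2) - P x := by
    funext x
    have := key_pointwise hd c f x (hfd x)
    rw [hP]
    linarith
  have hmain : Elin d c f =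
      sInt d (fun x => (kinkz d c x) ^ 2 * derivSq d 1 (fun y => f y / kinkz d c y) x) := by
    rw [hfun, sInt, integral_sub hE1int hPint]
    rw [Elin, sInt]
    rw [show (∫ x, P x ∂(sMeas d)) = sInt d P from rfl, hPzero]
    ring
  refine ⟨hmain, ?_⟩
  rw [hmain, sInt]
  apply integral_nonneg
  intro x
  exact mul_nonneg (sq_nonneg _) (derivSq_nonneg _ _ _ _)
end

section
/- Let 3 ≤ d ≤ 5, d' := max(d, 3), c⋆ ≥ 1, t⋆ > 0, and let C₁ > 0. Let 𝓔, D, H, c be positive quantities defined on the interval [0, t⋆] (with 𝓔, H, D differentiable) satisfying on [0, t⋆] the differential relations d𝓔/dt = −D, dH/dt ≤ C₁ c⋆^{1/2} ((c² D)^{1/2} + 𝓔^{3/2 − d'/12} D^{d'/12}), dD/dt ≤ C₁ (D^{3/2} + 𝓔^{1 − d'/6} D^{1 + d'/6}), and the algebraic relations 𝓔 ≤ C₁ ((H D)^{1/2} + c⋆² D) and c² ≤ C₁ ((H 𝓔)^{1/2} + c⋆ 𝓔). Then, setting 𝓔₀ := 𝓔(0), H₀ := H(0) and 𝒢₀ :=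 H₀ + c⋆² (1 + 𝓔₀²) 𝓔₀, there exists a constant C₂ depending only on C₁ and d' such that for every t ∈ (0, t⋆]: (i) 𝓔(t) ≤ 𝓔₀; (ii) 𝓔(t) ≤ C₂ 𝒢₀ t^{−1}; (iii) c(t)² ≤ C₂ 𝒢₀^{1/2} 𝓔₀^{1/2}; (iv) c(t)² ≤ C₂ 𝒢₀ t^{−1/2}; (v) H(t) ≤ C₂ 𝒢₀; (vi) D(t) ≤ C₂ (𝒢₀ + 𝒢₀² + 𝓔₀ 𝒢₀^{6/(6−d')} t^{−(2d'−6)/(6−d')}) t^{−2}. -/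
open MeasureTheory Real Filter Topology
open scoped ENNReal

namespace OdeLemmaAux
open Real Set

lemma anti_of_deriv {a b : ℝ} {f f' : ℝ → ℝ}
    (hf : ∀ t ∈ Icc a b, HasDerivAt f (f' t) t)
    (h0 : ∀ t ∈ Ioo a b, f' t ≤ 0) :
    ∀ ⦃s⦄, s ∈ Icc a b → ∀ ⦃t⦄, t ∈ Icc a b → s ≤ t → f t ≤ f s := by
  have h1 : AntitoneOn f (Icc a b) := by
    apply antitoneOn_of_deriv_nonpos (convex_Icc a b)
    · exact fun x hx => (hf x hx).continuousAt.continuousWithinAt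
    · intro x hx
      rw [interior_Icc] at hx
      exact (hf x (Ioo_subset_Icc_self hx)).differentiableAt.differentiableWithinAt
    · intro x hx
      rw [interior_Icc] at hx
      rw [(hf x (Ioo_subset_Icc_self hx)).deriv]
      exact h0 x hx
  exact fun s hs t ht hst => h1 hs ht hst

lemma mono_of_deriv {a b : ℝ} {f f' : ℝ → ℝ}
    (hf : ∀ t ∈ Icc a b, HasDerivAt f (f' t) t)
    (h0 : ∀ t ∈ Ioo a b, 0 ≤ f' t) :
    ∀ ⦃s⦄, s ∈ Icc a b → ∀ ⦃t⦄, t ∈ Icc a b → s ≤ t → f s ≤ f t := by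
  have h := anti_of_deriv (f := fun t => -f t) (f' := fun t => -f' t)
    (fun t ht => (hf t ht).neg) (fun t ht => neg_nonpos.mpr (h0 t ht))
  intro s hs t ht hst
  have h2 := h hs ht hst
  simpa using h2

lemma sqrt_rpow' (x : ℝ) (hx : 0 ≤ x) (p : ℝ) : Real.sqrt (x ^ p) = x ^ (p/2) := by
  rw [Real.sqrt_eq_rpow, ← Real.rpow_mul hx]
  congr 1
  ring

lemma sqrt_sqrt_eq (x : ℝ) (hx : 0 ≤ x) : Real.sqrt (Real.sqrt x) = x ^ ((1:ℝ)/4) := by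
  rw [Real.sqrt_eq_rpow x, sqrt_rpow' x hx]
  norm_num

lemma keyC (θ cstar E0 G0 : ℝ) (hθ1 : 1/2 ≤ θ) (hθ2 : θ ≤ 5/6)
    (hcs : 1 ≤ cstar) (hE0 : 0 < E0)
    (hG0' : cstar ^ 2 * (1 + E0 ^ 2) * E0 ≤ G0) :
    Real.sqrt cstar * E0 ^ ((θ + 1) / 2) ≤ G0 ^ (θ / 2) := by
  have hθpos : (0:ℝ) < θ := by linarith
  have hG0 : 0 < G0 := lt_of_lt_of_le (by positivity) hG0'
  have h1 : E0 ^ ((1:ℝ)/θ) ≤ 1 + E0 ^ 2 := by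
    rcases le_total E0 1 with h | h
    · have := Real.rpow_le_one hE0.le h (by positivity : (0:ℝ) ≤ 1/θ)
      nlinarith [sq_nonneg E0]
    · have h2 : E0 ^ ((1:ℝ)/θ) ≤ E0 ^ ((2:ℝ)) := by
        apply Real.rpow_le_rpow_of_exponent_le h
        rw [div_le_iff₀ hθpos]; linarith
      have h3 : E0 ^ ((2:ℝ)) = E0 ^ 2 := by
        rw [← Real.rpow_natCast E0 2]; norm_num
      rw [h3] at h2
      linarith
  have h2 : E0 ^ ((1:ℝ) + 1/θ) ≤ (1 + E0 ^ 2) * E0 := by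
    rw [Real.rpow_add hE0, Real.rpow_one]
    calc E0 * E0 ^ ((1:ℝ)/θ) = E0 ^ ((1:ℝ)/θ) * E0 := by ring
      _ ≤ (1 + E0 ^ 2) * E0 := mul_le_mul_of_nonneg_right h1 hE0.le
  have h3 : cstar * E0 ^ (θ + 1) ≤ G0 ^ θ := by
    have s1 : (cstar ^ 2 * (1 + E0 ^ 2) * E0) ^ θ ≤ G0 ^ θ :=
      Real.rpow_le_rpow (by positivity) hG0' hθpos.le
    have s2 : (cstar ^ 2 * (1 + E0 ^ 2) * E0) ^ θ
        = (cstar ^ 2) ^ θ * ((1 + E0 ^ 2) * E0) ^ θ := by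
      rw [mul_assoc, Real.mul_rpow (by positivity) (by positivity)]
    have s3 : cstar ≤ (cstar ^ 2) ^ θ := by
      have : (cstar ^ 2) ^ θ = cstar ^ ((2:ℝ) * θ) := by
        rw [← Real.rpow_natCast cstar 2, ← Real.rpow_mul (by linarith : (0:ℝ) ≤ cstar)]
        norm_num
      rw [this]
      calc cstar = cstar ^ ((1:ℝ)) := (Real.rpow_one cstar).symm
        _ ≤ cstar ^ ((2:ℝ) * θ) := Real.rpow_le_rpow_of_exponent_le hcs (by linarith)
    have s4 : E0 ^ (θ + 1) ≤ ((1 + E0 ^ 2) * E0) ^ θ := by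
      have e1 : E0 ^ (θ + 1) = (E0 ^ ((1:ℝ) + 1/θ)) ^ θ := by
        rw [← Real.rpow_mul hE0.le]
        congr 1
        field_simp
      rw [e1]
      exact Real.rpow_le_rpow (by positivity) h2 hθpos.le
    calc cstar * E0 ^ (θ + 1) ≤ (cstar ^ 2) ^ θ * ((1 + E0 ^ 2) * E0) ^ θ := by
          apply mul_le_mul s3 s4 (by positivity) (by positivity)
      _ = (cstar ^ 2 * (1 + E0 ^ 2) * E0) ^ θ := s2.symm
      _ ≤ G0 ^ θ := s1
  have h4 := Real.sqrt_le_sqrt h3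
  have e5 : Real.sqrt (cstar * E0 ^ (θ + 1)) = Real.sqrt cstar * E0 ^ ((θ + 1)/2) := by
    rw [Real.sqrt_mul (by linarith : (0:ℝ) ≤ cstar)]
    congr 1
    exact sqrt_rpow' E0 hE0.le (θ + 1)
  have e6 : Real.sqrt (G0 ^ θ) = G0 ^ (θ/2) := sqrt_rpow' G0 hG0.le θ
  rw [e5, e6] at h4
  exact h4

lemma core1 (θ C₁ cstar G0 E0 K K₁ E D H c H' : ℝ)
    (hθ1 : 1/2 ≤ θ) (hθ2 : θ ≤ 5/6)
    (hC₁ : 0 < C₁) (hcs : 1 ≤ cstar)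
    (hE0 : 0 < E0) (hG0 : 0 < G0)
    (hK : 0 < K) (hK₁ : 0 < K₁)
    (hE : 0 < E) (hD : 0 < D)
    (hcsE0 : cstar ^ 2 * E0 ≤ G0)
    (hEE0 : E ≤ E0)
    (hH : H ≤ K * G0)
    (hDlow : E ^ 2 ≤ K₁ * G0 * D)
    (hH'le : H' ≤ C₁ * Real.sqrt cstar * (Real.sqrt (c ^ 2 * D) +
       E ^ ((3:ℝ)/2 - θ/2) * D ^ (θ/2)))
    (hcineq : c ^ 2 ≤ C₁ * (Real.sqrt (H * E) + cstar * E)) :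
    H' ≤ (Real.sqrt (C₁ ^ 3 * (Real.sqrt K + 1) * K₁ / Real.sqrt E0) * G0) *
        (E ^ ((1:ℝ)/4 - 1) * D)
      + (C₁ * Real.sqrt cstar * (K₁ * G0) ^ (1 - θ/2)) * (E ^ ((θ+1)/2 - 1) * D) := by
  have hcs0 : (0:ℝ) ≤ cstar := by linarith
  have hsE0 : 0 < Real.sqrt E0 := Real.sqrt_pos.mpr hE0
  have hstep1 : cstar * Real.sqrt E0 ≤ Real.sqrt G0 := by
    have h1 : Real.sqrt (cstar ^ 2 * E0) ≤ Real.sqrt G0 := Real.sqrt_le_sqrt hcsE0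
    rwa [Real.sqrt_mul (by positivity) E0, Real.sqrt_sq hcs0] at h1
  have hstep2 : Real.sqrt (H * E) ≤ Real.sqrt K * Real.sqrt G0 * Real.sqrt E := by
    have h1 : Real.sqrt (H * E) ≤ Real.sqrt (K * G0 * E) :=
      Real.sqrt_le_sqrt (mul_le_mul_of_nonneg_right hH hE.le)
    have h2 : Real.sqrt (K * G0 * E) = Real.sqrt K * Real.sqrt G0 * Real.sqrt E := by
      rw [Real.sqrt_mul (by positivity : (0:ℝ) ≤ K * G0) E, Real.sqrt_mul hK.le G0]
    rwa [h2] at h1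
  have hstep3 : E * Real.sqrt E0 ≤ E0 * Real.sqrt E := by
    have h1 : E ^ 2 * E0 ≤ E0 ^ 2 * E := by
      nlinarith [mul_nonneg (mul_nonneg (sub_nonneg.mpr hEE0) hE.le) hE0.le]
    have h2 := Real.sqrt_le_sqrt h1
    rwa [Real.sqrt_mul (sq_nonneg E) E0, Real.sqrt_sq hE.le,
      Real.sqrt_mul (sq_nonneg E0) E, Real.sqrt_sq hE0.le] at h2
  have hA : cstar * c ^ 2 * Real.sqrt E0 ≤ C₁ * (Real.sqrt K + 1) * G0 * Real.sqrt E := by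
    have h2 : (cstar * Real.sqrt E0) * Real.sqrt (H * E) ≤ Real.sqrt K * G0 * Real.sqrt E := by
      calc (cstar * Real.sqrt E0) * Real.sqrt (H * E)
          ≤ Real.sqrt G0 * (Real.sqrt K * Real.sqrt G0 * Real.sqrt E) :=
            mul_le_mul hstep1 hstep2 (Real.sqrt_nonneg _) (Real.sqrt_nonneg _)
        _ = Real.sqrt K * (Real.sqrt G0 * Real.sqrt G0) * Real.sqrt E := by ring
        _ = Real.sqrt K * G0 * Real.sqrt E := by rw [Real.mul_self_sqrt hG0.le]
    have h3 : cstar ^ 2 * (E * Real.sqrt E0) ≤ G0 * Real.sqrt E := by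
      calc cstar ^ 2 * (E * Real.sqrt E0) ≤ cstar ^ 2 * (E0 * Real.sqrt E) :=
            mul_le_mul_of_nonneg_left hstep3 (by positivity)
        _ = (cstar ^ 2 * E0) * Real.sqrt E := by ring
        _ ≤ G0 * Real.sqrt E := mul_le_mul_of_nonneg_right hcsE0 (Real.sqrt_nonneg E)
    calc cstar * c ^ 2 * Real.sqrt E0 = (cstar * Real.sqrt E0) * c ^ 2 := by ring
      _ ≤ (cstar * Real.sqrt E0) * (C₁ * (Real.sqrt (H * E) + cstar * E)) :=
          mul_le_mul_of_nonneg_left hcineq (by positivity)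
      _ = C₁ * ((cstar * Real.sqrt E0) * Real.sqrt (H * E) + cstar ^ 2 * (E * Real.sqrt E0)) := by
          ring
      _ ≤ C₁ * (Real.sqrt K * G0 * Real.sqrt E + G0 * Real.sqrt E) := by
          apply mul_le_mul_of_nonneg_left (add_le_add h2 h3) hC₁.le
      _ = C₁ * (Real.sqrt K + 1) * G0 * Real.sqrt E := by ring
  have hX : (0:ℝ) ≤ C₁ ^ 3 * (Real.sqrt K + 1) * K₁ / Real.sqrt E0 := by positivity
  set X := C₁ ^ 3 * (Real.sqrt K + 1) * K₁ / Real.sqrt E0 with hXdef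
  have term1 : C₁ * Real.sqrt cstar * Real.sqrt (c ^ 2 * D) ≤
      (Real.sqrt X * G0) * (E ^ ((1:ℝ)/4 - 1) * D) := by
    have ha0 : (0:ℝ) ≤ C₁ * Real.sqrt cstar * Real.sqrt (c ^ 2 * D) * E := by positivity
    have hb0 : (0:ℝ) ≤ Real.sqrt X * G0 * E ^ ((1:ℝ)/4) * D := by positivity
    have hsq : (C₁ * Real.sqrt cstar * Real.sqrt (c ^ 2 * D) * E) ^ 2 ≤
        (Real.sqrt X * G0 * E ^ ((1:ℝ)/4) * D) ^ 2 := by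
      have e1 : (C₁ * Real.sqrt cstar * Real.sqrt (c ^ 2 * D) * E) ^ 2
          = C₁ ^ 2 * (cstar * (c ^ 2 * D)) * E ^ 2 := by
        rw [mul_pow, mul_pow, mul_pow, Real.sq_sqrt hcs0,
          Real.sq_sqrt (by positivity : (0:ℝ) ≤ c ^ 2 * D)]
        ring
      have e2 : (Real.sqrt X * G0 * E ^ ((1:ℝ)/4) * D) ^ 2
          = X * G0 ^ 2 * Real.sqrt E * D ^ 2 := by
        have e2a : (E ^ ((1:ℝ)/4)) ^ 2 = Real.sqrt E := by
          rw [← Real.rpow_natCast (E ^ ((1:ℝ)/4)) 2, ← Real.rpow_mul hE.le,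
            Real.sqrt_eq_rpow]
          norm_num
        rw [mul_pow, mul_pow, mul_pow, Real.sq_sqrt hX, e2a]
      rw [e1, e2, ← mul_le_mul_iff_of_pos_right hsE0]
      have e3 : X * Real.sqrt E0 = C₁ ^ 3 * (Real.sqrt K + 1) * K₁ := by
        rw [hXdef]; field_simp
      calc C₁ ^ 2 * (cstar * (c ^ 2 * D)) * E ^ 2 * Real.sqrt E0
          = (C₁ ^ 2 * D) * ((cstar * c ^ 2 * Real.sqrt E0) * E ^ 2) := by ring
        _ ≤ (C₁ ^ 2 * D) * ((C₁ * (Real.sqrt K + 1) * G0 * Real.sqrt E) * (K₁ * G0 * D)) := by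
            apply mul_le_mul_of_nonneg_left _ (by positivity)
            exact mul_le_mul hA hDlow (sq_nonneg E) (by positivity)
        _ = (C₁ ^ 3 * (Real.sqrt K + 1) * K₁) * (G0 ^ 2 * Real.sqrt E * D ^ 2) := by ring
        _ = X * G0 ^ 2 * Real.sqrt E * D ^ 2 * Real.sqrt E0 := by rw [← e3]; ring
    have hab : C₁ * Real.sqrt cstar * Real.sqrt (c ^ 2 * D) * E ≤
        Real.sqrt X * G0 * E ^ ((1:ℝ)/4) * D := by
      have h5 := Real.sqrt_le_sqrt hsq
      rwa [Real.sqrt_sq ha0, Real.sqrt_sq hb0] at h5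
    have e4 : E ^ ((1:ℝ)/4 - 1) = E ^ ((1:ℝ)/4) / E := by
      rw [Real.rpow_sub hE, Real.rpow_one]
    rw [e4, show Real.sqrt X * G0 * (E ^ ((1:ℝ)/4) / E * D)
      = (Real.sqrt X * G0 * E ^ ((1:ℝ)/4) * D) / E from by ring, le_div_iff₀ hE]
    exact hab
  have hKG0 : (0:ℝ) < K₁ * G0 := by positivity
  have term2 : C₁ * Real.sqrt cstar * (E ^ ((3:ℝ)/2 - θ/2) * D ^ (θ/2)) ≤
      (C₁ * Real.sqrt cstar * (K₁ * G0) ^ (1 - θ/2)) * (E ^ ((θ+1)/2 - 1) * D) := by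
    have u1 : D ^ (θ/2 - 1) ≤ (E ^ 2 / (K₁ * G0)) ^ (θ/2 - 1) := by
      apply Real.rpow_le_rpow_of_nonpos (by positivity)
        ((div_le_iff₀ hKG0).mpr (by linarith)) (by linarith)
    have u2 : (E ^ 2 / (K₁ * G0)) ^ (θ/2 - 1) = E ^ (θ - 2) * (K₁ * G0) ^ (1 - θ/2) := by
      rw [Real.div_rpow (sq_nonneg E) hKG0.le, ← Real.rpow_natCast E 2,
        ← Real.rpow_mul hE.le, div_eq_mul_inv, ← Real.rpow_neg hKG0.le]
      have e1 : ((2:ℕ):ℝ) * (θ/2 - 1) = θ - 2 := by push_cast; ring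
      have e2 : -(θ/2 - 1) = 1 - θ/2 := by ring
      rw [e1, e2]
    have u3 : D ^ (θ/2) = D * D ^ (θ/2 - 1) := by
      have e : D * D ^ (θ/2 - 1) = D ^ ((1:ℝ) + (θ/2 - 1)) := by
        rw [Real.rpow_add hD, Real.rpow_one]
      rw [e]
      congr 1
      ring
    have u4 : E ^ ((3:ℝ)/2 - θ/2) * E ^ (θ - 2) = E ^ ((θ+1)/2 - 1) := by
      rw [← Real.rpow_add hE]; congr 1; ring
    calc C₁ * Real.sqrt cstar * (E ^ ((3:ℝ)/2 - θ/2) * D ^ (θ/2))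
        = (C₁ * Real.sqrt cstar * E ^ ((3:ℝ)/2 - θ/2) * D) * D ^ (θ/2 - 1) := by
          rw [u3]; ring
      _ ≤ (C₁ * Real.sqrt cstar * E ^ ((3:ℝ)/2 - θ/2) * D) *
            (E ^ (θ - 2) * (K₁ * G0) ^ (1 - θ/2)) := by
          rw [← u2]
          exact mul_le_mul_of_nonneg_left u1 (by positivity)
      _ = (C₁ * Real.sqrt cstar * (K₁ * G0) ^ (1 - θ/2)) *
            ((E ^ ((3:ℝ)/2 - θ/2) * E ^ (θ - 2)) * D) := by ring
      _ = (C₁ * Real.sqrt cstar * (K₁ * G0) ^ (1 - θ/2)) * (E ^ ((θ+1)/2 - 1) * D) := by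
          rw [u4]
  calc H' ≤ C₁ * Real.sqrt cstar * (Real.sqrt (c ^ 2 * D) +
        E ^ ((3:ℝ)/2 - θ/2) * D ^ (θ/2)) := hH'le
    _ = C₁ * Real.sqrt cstar * Real.sqrt (c ^ 2 * D)
        + C₁ * Real.sqrt cstar * (E ^ ((3:ℝ)/2 - θ/2) * D ^ (θ/2)) := by ring
    _ ≤ _ := add_le_add term1 term2

lemma young_half (u a S : ℝ) (hu : u^2 = S) : a*u ≤ S/4 + a^2 := by
  nlinarith [sq_nonneg (u - 2*a)]

lemma young_theta (θ a E0 S : ℝ) (hθ1 : 1/2 ≤ θ) (hθ2 : θ ≤ 5/6) (ha : 0 < a)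
    (hE0 : 0 < E0) (hS : 0 < S) :
    a*(E0^(1-θ)*S^θ) ≤ S/8 + 32768*(a^((1:ℝ)/(1-θ)))*E0 := by
  have hθpos : (0:ℝ) < θ := by linarith
  have h1θ : (0:ℝ) < 1-θ := by linarith
  have hp2 : (0:ℝ) ≤ (8:ℝ)^(θ/(1-θ))*a^((1:ℝ)/(1-θ))*E0 := by positivity
  have h8 : (0:ℝ) < (8:ℝ)^θ := Real.rpow_pos_of_pos (by norm_num) θ
  have h8ne : (8:ℝ)^θ ≠ 0 := ne_of_gt h8
  have heq : a*(E0^(1-θ)*S^θ)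
      = (S/8)^θ * ((8:ℝ)^(θ/(1-θ))*a^((1:ℝ)/(1-θ))*E0)^(1-θ) := by
    rw [Real.mul_rpow (by positivity) hE0.le,
      Real.mul_rpow (by positivity) (by positivity),
      ← Real.rpow_mul (by norm_num : (0:ℝ) ≤ 8),
      ← Real.rpow_mul ha.le,
      Real.div_rpow hS.le (by norm_num : (0:ℝ) ≤ 8),
      show θ/(1-θ)*(1-θ) = θ from by field_simp,
      show (1:ℝ)/(1-θ)*(1-θ) = 1 from by field_simp,
      Real.rpow_one]
    field_simp
  have hgm := Real.geom_mean_le_arith_mean2_weighted hθpos.le h1θ.le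
    (by positivity : (0:ℝ) ≤ S/8) hp2 (by ring)
  have h8b : (8:ℝ)^(θ/(1-θ)) ≤ 32768 := by
    have h8a : (8:ℝ)^(θ/(1-θ)) ≤ (8:ℝ)^((5:ℝ)) :=
      Real.rpow_le_rpow_of_exponent_le (by norm_num) (by rw [div_le_iff₀ h1θ]; linarith)
    have h8c : (8:ℝ)^((5:ℝ)) = 32768 := by
      rw [show ((5:ℝ)) = ((5:ℕ):ℝ) from by norm_num, Real.rpow_natCast]
      norm_num
    linarith
  have harE0 : (0:ℝ) ≤ a^((1:ℝ)/(1-θ))*E0 := by positivity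
  have hterm : (1-θ)*((8:ℝ)^(θ/(1-θ))*a^((1:ℝ)/(1-θ))*E0)
      ≤ 32768*(a^((1:ℝ)/(1-θ)))*E0 := by
    calc (1-θ)*((8:ℝ)^(θ/(1-θ))*a^((1:ℝ)/(1-θ))*E0)
        ≤ 1*((8:ℝ)^(θ/(1-θ))*a^((1:ℝ)/(1-θ))*E0) := by
          apply mul_le_mul_of_nonneg_right (by linarith) (by positivity)
      _ = (8:ℝ)^(θ/(1-θ))*(a^((1:ℝ)/(1-θ))*E0) := by ring
      _ ≤ 32768*(a^((1:ℝ)/(1-θ))*E0) := mul_le_mul_of_nonneg_right h8b harE0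
      _ = 32768*(a^((1:ℝ)/(1-θ)))*E0 := by ring
  have hθS : θ*(S/8) ≤ S/8 := by
    have h := mul_le_mul_of_nonneg_right (show θ ≤ 1 by linarith)
      (show (0:ℝ) ≤ S/8 by positivity)
    rw [one_mul] at h
    exact h
  rw [heq]
  linarith

lemma apow_split (b g t r : ℝ) (hb : 0 < b) (hg : 0 < g) (ht : 0 < t)
    (hr0 : 0 ≤ r) (hr6 : r ≤ 6) :
    (b*g/t)^r ≤ (1+b)^6 * (g^r * t^(-r)) := by
  have e1 : b*g/t = b*g*t⁻¹ := by ring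
  rw [e1, Real.mul_rpow (by positivity) (by positivity),
    Real.mul_rpow hb.le hg.le, Real.inv_rpow ht.le, ← Real.rpow_neg ht.le]
  have h1 : b^r ≤ (1+b)^((6:ℝ)) :=
    le_trans (Real.rpow_le_rpow hb.le (by linarith) hr0)
      (Real.rpow_le_rpow_of_exponent_le (by linarith) hr6)
  have h2 : (1+b)^((6:ℝ)) = (1+b)^(6:ℕ) := by
    rw [show ((6:ℝ)) = ((6:ℕ):ℝ) from by norm_num, Real.rpow_natCast]
  rw [h2] at h1
  calc b^r*g^r*t^(-r) = (g^r*t^(-r))*b^r := by ring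
    _ ≤ (g^r*t^(-r))*(1+b)^(6:ℕ) := by
        apply mul_le_mul_of_nonneg_left h1 (by positivity)
    _ = (1+b)^6*(g^r*t^(-r)) := by ring

end OdeLemmaAux

set_option maxHeartbeats 4000000 in
/-- Lemma 4.4 (ODE lemma): positive quantities `E, D, H, c` satisfying the stated
differential and algebraic relations on `[0, t⋆]` obey the relaxation rates,
with a constant `C₂` depending only on `C₁` and `d'`. -/
theorem ode_lemma (d d' : ℕ) (hd3 : 3 ≤ d) (hd5 : d ≤ 5) (hd' : d' = max d 3)
    (C₁ : ℝ) (hC₁ : 0 < C₁) :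
    ∃ C₂ : ℝ, 0 < C₂ ∧
    ∀ tstar cstar : ℝ, 0 < tstar → 1 ≤ cstar →
    ∀ E D H c H' D' : ℝ → ℝ,
      (∀ t ∈ Set.Icc (0 : ℝ) tstar, 0 < E t ∧ 0 < D t ∧ 0 < H t ∧ 0 < c t) →
      (∀ t ∈ Set.Icc (0 : ℝ) tstar, HasDerivAt E (-(D t)) t) →
      (∀ t ∈ Set.Icc (0 : ℝ) tstar, HasDerivAt H (H' t) t) →
      (∀ t ∈ Set.Icc (0 : ℝ) tstar, HasDerivAt D (D' t) t) →
      (∀ t ∈ Set.Icc (0 : ℝ) tstar,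
        H' t ≤ C₁ * Real.sqrt cstar * (Real.sqrt ((c t) ^ 2 * D t) +
          (E t) ^ ((3 : ℝ) / 2 - (d' : ℝ) / 12) * (D t) ^ ((d' : ℝ) / 12))) →
      (∀ t ∈ Set.Icc (0 : ℝ) tstar,
        D' t ≤ C₁ * ((D t) ^ ((3 : ℝ) / 2) +
          (E t) ^ (1 - (d' : ℝ) / 6) * (D t) ^ (1 + (d' : ℝ) / 6))) →
      (∀ t ∈ Set.Icc (0 : ℝ) tstar,
        E t ≤ C₁ * (Real.sqrt (H t * D t) + cstar ^ 2 * D t)) →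
      (∀ t ∈ Set.Icc (0 : ℝ) tstar,
        (c t) ^ 2 ≤ C₁ * (Real.sqrt (H t * E t) + cstar * E t)) →
      ∀ t ∈ Set.Ioc (0 : ℝ) tstar,
        (let G0 := H 0 + cstar ^ 2 * (1 + (E 0) ^ 2) * E 0;
         E t ≤ E 0 ∧
         E t ≤ C₂ * G0 / t ∧
         (c t) ^ 2 ≤ C₂ * Real.sqrt G0 * Real.sqrt (E 0) ∧
         (c t) ^ 2 ≤ C₂ * G0 * t ^ (-(1 : ℝ) / 2) ∧
         H t ≤ C₂ * G0 ∧
         D t ≤ C₂ * (G0 + G0 ^ 2 + E 0 * G0 ^ ((6 : ℝ) / (6 - (d' : ℝ)))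
           * t ^ (-(2 * (d' : ℝ) - 6) / (6 - (d' : ℝ)))) / t ^ 2) := by
  classical
  have hd'3 : 3 ≤ d' := by omega
  have hd'5 : d' ≤ 5 := by omega
  have hd'r3 : (3:ℝ) ≤ (d':ℝ) := by exact_mod_cast hd'3
  have hd'r5 : ((d':ℕ):ℝ) ≤ 5 := by exact_mod_cast hd'5
  set θ : ℝ := (d':ℝ)/6 with hθdef
  clear_value θ
  have hθ1 : 1/2 ≤ θ := by rw [hθdef]; linarith
  have hθ2 : θ ≤ 5/6 := by rw [hθdef]; linarith
  have hθpos : (0:ℝ) < θ := by linarith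
  have h1θ : (0:ℝ) < 1 - θ := by linarith
  -- constants depending only on C₁ and d'
  set c₁ : ℝ := 4*C₁^2 + 2*C₁ + 1 with hc₁def
  clear_value c₁
  have hc₁1 : 1 ≤ c₁ := by rw [hc₁def]; nlinarith [sq_nonneg C₁]
  set c₂ : ℝ := 4*Real.sqrt (2*C₁^3*c₁) + 2*C₁*c₁ with hc₂def
  clear_value c₂
  have hc₂0 : 0 ≤ c₂ := by
    rw [hc₂def]
    have : (0:ℝ) ≤ Real.sqrt (2*C₁^3*c₁) := Real.sqrt_nonneg _
    nlinarith
  set κ : ℝ := 2 + 2*c₂ with hκdef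
  clear_value κ
  have hκ2 : 2 ≤ κ := by rw [hκdef]; linarith
  have hκpos : (0:ℝ) < κ := by linarith
  set K : ℝ := κ^4 with hKdef
  clear_value K
  have hκ4 : (16:ℝ) ≤ κ^4 := by
    have h16 : (2:ℝ)^4 ≤ κ^4 := pow_le_pow_left₀ (by norm_num) hκ2 4
    norm_num at h16
    linarith
  have hK1 : 1 ≤ K := by rw [hKdef]; linarith
  have hKpos : (0:ℝ) < K := by linarith
  set K₁ : ℝ := 4*C₁^2*K + 2*C₁ + 1 with hK₁def
  clear_value K₁
  have hK₁1 : 1 ≤ K₁ := by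
    rw [hK₁def]; linarith [mul_pos (mul_pos (by norm_num : (0:ℝ)<4) (pow_pos hC₁ 2)) hKpos]
  have hK₁pos : (0:ℝ) < K₁ := by linarith
  set C₂ : ℝ := K₁ + K + C₁*(Real.sqrt K + 1) + C₁*(Real.sqrt (K*K₁) + Real.sqrt K₁)
      + 8*K₁ + 8*C₁^2*K₁^2 + 65536*(1+2*C₁*K₁)^6 with hC₂def
  clear_value C₂
  have hC₂parts : 0 ≤ C₁*(Real.sqrt K + 1) ∧ 0 ≤ C₁*(Real.sqrt (K*K₁) + Real.sqrt K₁)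
      ∧ 0 ≤ 8*K₁ ∧ 0 ≤ 8*C₁^2*K₁^2 ∧ 0 ≤ 65536*(1+2*C₁*K₁)^6 := by
    refine ⟨by positivity, by positivity, by linarith, by positivity, ?_⟩
    have : (0:ℝ) < 1+2*C₁*K₁ := by linarith [mul_pos hC₁ hK₁pos]
    positivity
  obtain ⟨hp1, hp2, hp3, hp4, hp5⟩ := hC₂parts
  have hC₂pos : 0 < C₂ := by rw [hC₂def]; linarith
  refine ⟨C₂, hC₂pos, ?_⟩
  intro tstar cstar htstar hcstar E D H c H' D' hpos hEd hHd hDd hH'le hD'le halgE halgc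
  have hcs0 : (0:ℝ) < cstar := lt_of_lt_of_le one_pos hcstar
  have h0mem : (0:ℝ) ∈ Set.Icc (0:ℝ) tstar := ⟨le_refl 0, htstar.le⟩
  obtain ⟨hE0pos, hD0pos, hH0pos, hc0pos⟩ := hpos 0 h0mem
  set G0 : ℝ := H 0 + cstar^2*(1+(E 0)^2)*(E 0) with hG0def
  clear_value G0
  have hcsE03 : (0:ℝ) < cstar^2*(1+(E 0)^2)*(E 0) :=
    mul_pos (mul_pos (pow_pos hcs0 2) (by positivity)) hE0pos
  have hG0pos : 0 < G0 := by
    rw [hG0def]; linarith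
  have hG0' : cstar^2*(1+(E 0)^2)*(E 0) ≤ G0 := by rw [hG0def]; linarith
  have hcsE0 : cstar^2 * E 0 ≤ G0 := by
    rw [hG0def]
    linarith [hH0pos, mul_nonneg (sq_nonneg cstar) (pow_nonneg hE0pos.le 3)]
  have hH0G0 : H 0 ≤ G0 := by
    rw [hG0def]; linarith
  -- rewrite exponents in terms of θ
  have eθ1 : (3:ℝ)/2 - (d':ℝ)/12 = 3/2 - θ/2 := by rw [hθdef]; ring
  have eθ2 : ((d':ℕ):ℝ)/12 = θ/2 := by rw [hθdef]; ring
  simp only [eθ1, eθ2] at hH'le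
  -- E is decreasing
  have hEanti : ∀ ⦃s⦄, s ∈ Set.Icc (0:ℝ) tstar → ∀ ⦃τ⦄, τ ∈ Set.Icc (0:ℝ) tstar →
      s ≤ τ → E τ ≤ E s :=
    OdeLemmaAux.anti_of_deriv hEd
      (fun τ hτ => neg_nonpos.mpr (hpos τ (Set.Ioo_subset_Icc_self hτ)).2.1.le)
  have hEt0 : ∀ τ ∈ Set.Icc (0:ℝ) tstar, E τ ≤ E 0 := fun τ hτ => hEanti h0mem hτ hτ.1
  have hHcont : ContinuousOn H (Set.Icc 0 tstar) :=
    fun τ hτ => (hHd τ hτ).continuousAt.continuousWithinAt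
  have hDcont : ContinuousOn D (Set.Icc 0 tstar) :=
    fun τ hτ => (hDd τ hτ).continuousAt.continuousWithinAt
  -- lower bound on D given H-bound
  have dlow : ∀ τ ∈ Set.Icc (0:ℝ) tstar, H τ ≤ K*G0 → (E τ)^2 ≤ K₁*G0*(D τ) := by
    intro τ hτ hHτ
    obtain ⟨hEτ, hDτ, hHτ0, hcτ⟩ := hpos τ hτ
    have halg := halgE τ hτ
    rcases le_total (Real.sqrt (H τ * D τ)) (cstar^2 * D τ) with hcase | hcase
    · have h1 : E τ ≤ 2*C₁*(cstar^2*D τ) := by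
        have hm := mul_le_mul_of_nonneg_left hcase hC₁.le
        linarith
      have h2 : E τ * E τ ≤ E 0 * (2*C₁*(cstar^2*D τ)) :=
        mul_le_mul (hEt0 τ hτ) h1 hEτ.le hE0pos.le
      have h3 : E 0 * (2*C₁*(cstar^2*D τ)) = 2*C₁*((cstar^2*E 0)*D τ) := by ring
      have h4 : 2*C₁*((cstar^2*E 0)*D τ) ≤ 2*C₁*(G0*D τ) := by
        apply mul_le_mul_of_nonneg_left _ (by linarith)
        exact mul_le_mul_of_nonneg_right hcsE0 hDτ.le
      have h5 : 2*C₁*(G0*D τ) ≤ K₁*(G0*D τ) := by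
        apply mul_le_mul_of_nonneg_right _ (by positivity)
        rw [hK₁def]; linarith [mul_pos (mul_pos (by norm_num : (0:ℝ)<4) (pow_pos hC₁ 2)) hKpos]
      calc (E τ)^2 = E τ * E τ := sq (E τ)
        _ ≤ E 0 * (2*C₁*(cstar^2*D τ)) := h2
        _ = 2*C₁*((cstar^2*E 0)*D τ) := h3
        _ ≤ 2*C₁*(G0*D τ) := h4
        _ ≤ K₁*(G0*D τ) := h5
        _ = K₁*G0*D τ := by ring
    · have h1 : E τ ≤ 2*C₁*Real.sqrt (H τ * D τ) := by
        have hm := mul_le_mul_of_nonneg_left hcase hC₁.le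
        linarith
      have h2 : (E τ)^2 ≤ (2*C₁*Real.sqrt (H τ * D τ))^2 := by
        apply pow_le_pow_left₀ hEτ.le h1
      have h3 : (2*C₁*Real.sqrt (H τ * D τ))^2 = 4*C₁^2*(H τ * D τ) := by
        rw [mul_pow, mul_pow, Real.sq_sqrt (by positivity)]
        ring
      have h4 : H τ * D τ ≤ (K*G0)*D τ := mul_le_mul_of_nonneg_right hHτ hDτ.le
      have h5 : 4*C₁^2*(H τ * D τ) ≤ 4*C₁^2*((K*G0)*D τ) :=
        mul_le_mul_of_nonneg_left h4 (by positivity)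
      have h6 : 4*C₁^2*((K*G0)*D τ) ≤ K₁*G0*D τ := by
        have e1 : 4*C₁^2*((K*G0)*D τ) = (4*C₁^2*K)*(G0*D τ) := by ring
        have e2 : K₁*G0*D τ = K₁*(G0*D τ) := by ring
        rw [e1, e2]
        apply mul_le_mul_of_nonneg_right _ (by positivity)
        rw [hK₁def]; linarith
      calc (E τ)^2 ≤ (2*C₁*Real.sqrt (H τ * D τ))^2 := h2
        _ = 4*C₁^2*(H τ * D τ) := h3
        _ ≤ 4*C₁^2*((K*G0)*D τ) := h5
        _ ≤ K₁*G0*D τ := h6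
  -- Bootstrap: H ≤ K * G0 on [0, tstar]
  have hHK : ∀ τ ∈ Set.Icc (0:ℝ) tstar, H τ ≤ K*G0 := by
    by_contra hcon
    push_neg at hcon
    obtain ⟨τ₀, hτ₀, hτ₀H⟩ := hcon
    have hSne : ({τ ∈ Set.Icc (0:ℝ) tstar | K*G0 ≤ H τ} : Set ℝ).Nonempty :=
      ⟨τ₀, hτ₀, hτ₀H.le⟩
    have hScl : IsClosed ({τ ∈ Set.Icc (0:ℝ) tstar | K*G0 ≤ H τ} : Set ℝ) := by
      have he : ({τ ∈ Set.Icc (0:ℝ) tstar | K*G0 ≤ H τ} : Set ℝ)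
          = Set.Icc (0:ℝ) tstar ∩ H ⁻¹' (Set.Ici (K*G0)) := by
        ext x
        simp [Set.mem_sep_iff, Set.mem_preimage, Set.mem_Ici, Set.mem_inter_iff]
      rw [he]
      exact hHcont.preimage_isClosed_of_isClosed isClosed_Icc isClosed_Ici
    have hbdd : BddBelow ({τ ∈ Set.Icc (0:ℝ) tstar | K*G0 ≤ H τ} : Set ℝ) :=
      ⟨0, fun τ hτ => hτ.1.1⟩
    set T0 := sInf ({τ ∈ Set.Icc (0:ℝ) tstar | K*G0 ≤ H τ} : Set ℝ) with hT0def
    clear_value T0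
    have hT0S := hScl.csInf_mem hSne hbdd
    rw [← hT0def] at hT0S
    obtain ⟨hT0Icc, hT0H⟩ := hT0S
    have hKgt1 : 1 < K := by rw [hKdef]; linarith
    have hT0pos : 0 < T0 := by
      rcases lt_or_eq_of_le hT0Icc.1 with h | h
      · exact h
      · exfalso
        rw [← h] at hT0H
        have h2 := mul_lt_mul_of_pos_right hKgt1 hG0pos
        rw [one_mul] at h2
        linarith
    have hIccsub : Set.Icc 0 T0 ⊆ Set.Icc 0 tstar := Set.Icc_subset_Icc_right hT0Icc.2
    have hless : ∀ τ ∈ Set.Ioo 0 T0, H τ ≤ K*G0 := by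
      intro τ hτ
      by_contra h
      push_neg at h
      have hmem : τ ∈ ({τ ∈ Set.Icc (0:ℝ) tstar | K*G0 ≤ H τ} : Set ℝ) :=
        ⟨⟨hτ.1.le, le_trans hτ.2.le hT0Icc.2⟩, h.le⟩
      have := csInf_le hbdd hmem
      rw [← hT0def] at this
      linarith [hτ.2]
    set P : ℝ := Real.sqrt (C₁^3*(Real.sqrt K + 1)*K₁/Real.sqrt (E 0)) * G0 with hPdef
    clear_value P
    set Q : ℝ := C₁ * Real.sqrt cstar * (K₁*G0) ^ (1 - θ/2) with hQdef
    clear_value Q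
    have hP0 : 0 ≤ P := by rw [hPdef]; positivity
    have hQ0 : 0 ≤ Q := by rw [hQdef]; positivity
    have hθ1pos : (0:ℝ) < θ + 1 := by linarith
    have hθ1ne : θ + 1 ≠ 0 := ne_of_gt hθ1pos
    have hWd : ∀ τ ∈ Set.Icc 0 T0, HasDerivAt
        (fun τ => H τ + (4*P)*(E τ)^((1:ℝ)/4) + (Q*(2/(θ+1)))*(E τ)^((θ+1)/2))
        (H' τ - P*((E τ)^((1:ℝ)/4-1)*D τ) - Q*((E τ)^((θ+1)/2-1)*D τ)) τ := by
      intro τ hτ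
      have hτ' := hIccsub hτ
      have hEτ := (hpos τ hτ').1
      have h1 := ((hEd τ hτ').rpow_const (p := (1:ℝ)/4) (Or.inl hEτ.ne')).const_mul (4*P)
      have h2 := ((hEd τ hτ').rpow_const (p := (θ+1)/2) (Or.inl hEτ.ne')).const_mul
        (Q*(2/(θ+1)))
      have h3 := ((hHd τ hτ').add h1).add h2
      convert h3 using 1
      · rfl
      · rfl
      · rfl
      · field_simp
        ring
    have hW'le : ∀ τ ∈ Set.Ioo 0 T0,
        H' τ - P*((E τ)^((1:ℝ)/4-1)*D τ) - Q*((E τ)^((θ+1)/2-1)*D τ) ≤ 0 := by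
      intro τ hτ
      have hτ' := hIccsub (Set.Ioo_subset_Icc_self hτ)
      obtain ⟨hEτ, hDτ, hHτ0, hcτ⟩ := hpos τ hτ'
      have hHτ := hless τ hτ
      have hdl := dlow τ hτ' hHτ
      have hcore := OdeLemmaAux.core1 θ C₁ cstar G0 (E 0) K K₁ (E τ) (D τ) (H τ) (c τ)
        (H' τ) hθ1 hθ2 hC₁ hcstar hE0pos hG0pos hKpos hK₁pos hEτ hDτ
        hcsE0 (hEt0 τ hτ') hHτ hdl (hH'le τ hτ') (halgc τ hτ')
      rw [hPdef, hQdef]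
      linarith [hcore]
    have hanti := OdeLemmaAux.anti_of_deriv hWd hW'le
      (Set.left_mem_Icc.mpr hT0pos.le) (Set.right_mem_Icc.mpr hT0pos.le) hT0pos.le
    have hWT0 : H T0 + (4*P)*(E T0)^((1:ℝ)/4) + (Q*(2/(θ+1)))*(E T0)^((θ+1)/2)
        ≤ H 0 + (4*P)*(E 0)^((1:ℝ)/4) + (Q*(2/(θ+1)))*(E 0)^((θ+1)/2) := hanti
    obtain ⟨hET0, hDT0, hHT0', hcT0⟩ := hpos T0 (hIccsub (Set.right_mem_Icc.mpr hT0pos.le))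
    have hHT0le : H T0 ≤ H 0 + (4*P)*(E 0)^((1:ℝ)/4) + (Q*(2/(θ+1)))*(E 0)^((θ+1)/2) := by
      have h1 : 0 ≤ (4*P)*(E T0)^((1:ℝ)/4) := by positivity
      have h2 : 0 ≤ (Q*(2/(θ+1)))*(E T0)^((θ+1)/2) := by
        apply mul_nonneg (mul_nonneg hQ0 (div_nonneg (by norm_num) hθ1pos.le))
        exact Real.rpow_nonneg hET0.le _
      linarith
    -- numeric bounds
    have hsqK : Real.sqrt K = κ^2 := by
      rw [hKdef, show κ^4 = (κ^2)^2 from by ring, Real.sqrt_sq (by positivity)]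
    have h2C₁1 : (0:ℝ) ≤ 2*C₁+1 := by linarith
    have hKm1 : (0:ℝ) ≤ K - 1 := by linarith
    have hK₁le : K₁ ≤ c₁ * K := by
      have h1 : (0:ℝ) ≤ (2*C₁+1) * (K-1) := mul_nonneg h2C₁1 hKm1
      rw [hK₁def, hc₁def]
      linarith [h1]
    have hK₁le4 : K₁ ≤ c₁*κ^4 := by rw [hKdef] at hK₁le; exact hK₁le
    have hκsq : (4:ℝ) ≤ κ^2 := by
      have h := pow_le_pow_left₀ (by norm_num : (0:ℝ) ≤ 2) hκ2 2
      norm_num at h; linarith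
    have hsqX : Real.sqrt (C₁^3*(Real.sqrt K + 1)*K₁) ≤ Real.sqrt (2*C₁^3*c₁)*κ^3 := by
      have h1 : Real.sqrt K + 1 ≤ 2*κ^2 := by rw [hsqK]; linarith
      have hXle : C₁^3*(Real.sqrt K + 1)*K₁ ≤ (2*C₁^3*c₁)*(κ^3)^2 := by
        have h2 : (Real.sqrt K + 1)*K₁ ≤ (2*κ^2)*(c₁*κ^4) := by
          apply mul_le_mul h1 hK₁le4 (by linarith) (by positivity)
        calc C₁^3*(Real.sqrt K + 1)*K₁ = C₁^3*((Real.sqrt K + 1)*K₁) := by ring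
          _ ≤ C₁^3*((2*κ^2)*(c₁*κ^4)) := mul_le_mul_of_nonneg_left h2 (by positivity)
          _ = (2*C₁^3*c₁)*(κ^3)^2 := by ring
      calc Real.sqrt (C₁^3*(Real.sqrt K + 1)*K₁) ≤ Real.sqrt ((2*C₁^3*c₁)*(κ^3)^2) :=
            Real.sqrt_le_sqrt hXle
        _ = Real.sqrt (2*C₁^3*c₁)*κ^3 := by
            rw [Real.sqrt_mul (by positivity) ((κ^3)^2), Real.sqrt_sq (by positivity)]
    have hE014 : (E 0) ^ ((1:ℝ)/4) ≠ 0 := ne_of_gt (Real.rpow_pos_of_pos hE0pos _)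
    have e1 : P*(E 0)^((1:ℝ)/4) = Real.sqrt (C₁^3*(Real.sqrt K + 1)*K₁)*G0 := by
      rw [hPdef, Real.sqrt_div (by positivity) (Real.sqrt (E 0)),
        OdeLemmaAux.sqrt_sqrt_eq (E 0) hE0pos.le]
      field_simp
    have hn1 : (4*P)*(E 0)^((1:ℝ)/4) ≤ 4*(Real.sqrt (2*C₁^3*c₁)*κ^3)*G0 := by
      have e2 : (4*P)*(E 0)^((1:ℝ)/4) = 4*(P*(E 0)^((1:ℝ)/4)) := by ring
      rw [e2, e1]
      have h3 := mul_le_mul_of_nonneg_right hsqX hG0pos.le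
      linarith
    -- second numeric bound
    have hkey := OdeLemmaAux.keyC θ cstar (E 0) G0 hθ1 hθ2 hcstar hE0pos hG0'
    have hq1 : Q*(E 0)^((θ+1)/2) ≤ C₁*(K₁*G0)^(1-θ/2)*G0^(θ/2) := by
      have e3 : Q*(E 0)^((θ+1)/2)
          = C₁*(K₁*G0)^(1-θ/2)*(Real.sqrt cstar*(E 0)^((θ+1)/2)) := by rw [hQdef]; ring
      rw [e3]
      exact mul_le_mul_of_nonneg_left hkey (by positivity)
    have hq2 : (K₁*G0)^(1-θ/2) = K₁^(1-θ/2)*G0^(1-θ/2) := Real.mul_rpow hK₁pos.le hG0pos.le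
    have hq3 : G0^(1-θ/2)*G0^(θ/2) = G0 := by
      rw [← Real.rpow_add hG0pos, show (1-θ/2)+(θ/2) = (1:ℝ) from by ring, Real.rpow_one]
    have hq4 : K₁^(1-θ/2) ≤ c₁*κ^3 := by
      have hb : (1:ℝ) ≤ c₁*κ^4 := by
        have h := mul_le_mul hc₁1 (show (1:ℝ) ≤ κ^4 by linarith) (by norm_num) (by linarith)
        linarith
      have b1 : K₁^(1-θ/2) ≤ (c₁*κ^4)^(1-θ/2) :=
        Real.rpow_le_rpow (by linarith) hK₁le4 (by linarith)
      have b2 : (c₁*κ^4)^(1-θ/2) ≤ (c₁*κ^4)^((3:ℝ)/4) :=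
        Real.rpow_le_rpow_of_exponent_le hb (by linarith)
      have b3 : (c₁*κ^4)^((3:ℝ)/4) = c₁^((3:ℝ)/4) * κ^3 := by
        rw [Real.mul_rpow (by linarith) (by positivity)]
        congr 1
        rw [← Real.rpow_natCast κ 4, ← Real.rpow_mul hκpos.le,
          show ((4:ℕ):ℝ)*((3:ℝ)/4) = ((3:ℕ):ℝ) from by push_cast; ring,
          Real.rpow_natCast]
      have b4 : c₁^((3:ℝ)/4) ≤ c₁ := by
        calc c₁^((3:ℝ)/4) ≤ c₁^((1:ℝ)) :=
              Real.rpow_le_rpow_of_exponent_le hc₁1 (by norm_num)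
          _ = c₁ := Real.rpow_one c₁
      calc K₁^(1-θ/2) ≤ (c₁*κ^4)^(1-θ/2) := b1
        _ ≤ (c₁*κ^4)^((3:ℝ)/4) := b2
        _ = c₁^((3:ℝ)/4)*κ^3 := b3
        _ ≤ c₁*κ^3 := mul_le_mul_of_nonneg_right b4 (by positivity)
    have hq5 : Q*(E 0)^((θ+1)/2) ≤ C₁*(c₁*κ^3)*G0 := by
      calc Q*(E 0)^((θ+1)/2) ≤ C₁*(K₁*G0)^(1-θ/2)*G0^(θ/2) := hq1
        _ = C₁*K₁^(1-θ/2)*(G0^(1-θ/2)*G0^(θ/2)) := by rw [hq2]; ring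
        _ = C₁*K₁^(1-θ/2)*G0 := by rw [hq3]
        _ ≤ C₁*(c₁*κ^3)*G0 :=
            mul_le_mul_of_nonneg_right (mul_le_mul_of_nonneg_left hq4 hC₁.le) hG0pos.le
    have hq6 : 2/(θ+1) ≤ 2 := by rw [div_le_iff₀ hθ1pos]; linarith
    have hn2 : (Q*(2/(θ+1)))*(E 0)^((θ+1)/2) ≤ 2*(C₁*(c₁*κ^3))*G0 := by
      have e4 : (Q*(2/(θ+1)))*(E 0)^((θ+1)/2) = (2/(θ+1))*(Q*(E 0)^((θ+1)/2)) := by ring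
      rw [e4]
      calc (2/(θ+1))*(Q*(E 0)^((θ+1)/2)) ≤ 2*(Q*(E 0)^((θ+1)/2)) :=
            mul_le_mul_of_nonneg_right hq6
              (mul_nonneg hQ0 (Real.rpow_nonneg hE0pos.le _))
        _ ≤ 2*(C₁*(c₁*κ^3)*G0) := by linarith
        _ = 2*(C₁*(c₁*κ^3))*G0 := by ring
    have hfin : H T0 ≤ (1 + c₂*κ^3)*G0 := by
      have e5 : 4*(Real.sqrt (2*C₁^3*c₁)*κ^3)*G0 + 2*(C₁*(c₁*κ^3))*G0 = c₂*κ^3*G0 := by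
        rw [hc₂def]; ring
      linarith
    have hκ3 : (8:ℝ) ≤ κ^3 := by
      have h := pow_le_pow_left₀ (by norm_num : (0:ℝ) ≤ 2) hκ2 3
      norm_num at h; linarith
    have hKbig : 1 + c₂*κ^3 < K := by
      have e6 : K = (2+2*c₂)*κ^3 := by rw [hKdef, hκdef]; ring
      rw [e6]
      have h7 : 0 ≤ c₂*κ^3 := mul_nonneg hc₂0 (by positivity)
      linarith
    have h8 := mul_lt_mul_of_pos_right hKbig hG0pos
    linarith
  -- the decay estimate for E
  have hEdec : ∀ τ ∈ Set.Icc (0:ℝ) tstar, E τ * τ ≤ K₁*G0 := by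
    have hφd : ∀ τ ∈ Set.Icc (0:ℝ) tstar, HasDerivAt
        (fun τ => K₁*G0*(E τ)⁻¹ - τ) (K₁*G0*(D τ/(E τ)^2) - 1) τ := by
      intro τ hτ
      have hEτ := (hpos τ hτ).1
      have h1 := ((hEd τ hτ).inv hEτ.ne').const_mul (K₁*G0)
      have h2 := h1.sub (hasDerivAt_id τ)
      convert h2 using 1
      · rfl
      · rfl
      · rfl
      · ring
    have hφ'0 : ∀ τ ∈ Set.Ioo (0:ℝ) tstar, 0 ≤ K₁*G0*(D τ/(E τ)^2) - 1 := by
      intro τ hτ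
      have hτ' := Set.Ioo_subset_Icc_self hτ
      have hEτ := (hpos τ hτ').1
      have hdl := dlow τ hτ' (hHK τ hτ')
      rw [sub_nonneg, show K₁*G0*(D τ/(E τ)^2) = (K₁*G0*(D τ))/(E τ)^2 from by ring,
        le_div_iff₀ (pow_pos hEτ 2)]
      linarith
    intro τ hτ
    have hmono : K₁*G0*(E 0)⁻¹ - 0 ≤ K₁*G0*(E τ)⁻¹ - τ :=
      OdeLemmaAux.mono_of_deriv hφd hφ'0 h0mem hτ hτ.1
    have hEτ := (hpos τ hτ).1
    have h1 : τ ≤ K₁*G0*(E τ)⁻¹ := by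
      have h0 : 0 ≤ K₁*G0*(E 0)⁻¹ := by positivity
      linarith
    have h2 := mul_le_mul_of_nonneg_left h1 hEτ.le
    calc E τ * τ ≤ E τ * (K₁*G0*(E τ)⁻¹) := h2
      _ = K₁*G0 := by field_simp
  -- conclusions
  intro t ht
  have htIcc : t ∈ Set.Icc (0:ℝ) tstar := ⟨ht.1.le, ht.2⟩
  have htpos : 0 < t := ht.1
  obtain ⟨hEt, hDt, hHt, hct⟩ := hpos t htIcc
  have hEtt : E t * t ≤ K₁*G0 := hEdec t htIcc
  -- (i)
  have g1 : E t ≤ E 0 := hEt0 t htIcc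
  -- (ii)
  have hK₁C₂ : K₁ ≤ C₂ := by rw [hC₂def]; linarith [hp1, hp2, hp3, hp4, hp5, hKpos]
  have hKC₂ : K ≤ C₂ := by rw [hC₂def]; linarith [hp1, hp2, hp3, hp4, hp5, hK₁pos]
  have g2 : E t ≤ C₂*G0/t := by
    rw [le_div_iff₀ htpos]
    calc E t * t ≤ K₁*G0 := hEtt
      _ ≤ C₂*G0 := mul_le_mul_of_nonneg_right hK₁C₂ hG0pos.le
  -- (iii)
  have hcst : cstar * Real.sqrt (E 0) ≤ Real.sqrt G0 := by
    have h1 := Real.sqrt_le_sqrt hcsE0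
    rwa [Real.sqrt_mul (by positivity) (E 0), Real.sqrt_sq hcs0.le] at h1
  have g3 : (c t)^2 ≤ C₂*Real.sqrt G0*Real.sqrt (E 0) := by
    have b1 : Real.sqrt (H t * E t) ≤ Real.sqrt K * Real.sqrt G0 * Real.sqrt (E 0) := by
      have h1 : H t * E t ≤ K*G0 * E 0 :=
        mul_le_mul (hHK t htIcc) (hEt0 t htIcc) hEt.le (by positivity)
      have h2 := Real.sqrt_le_sqrt h1
      rwa [Real.sqrt_mul (by positivity : (0:ℝ) ≤ K*G0) (E 0),
        Real.sqrt_mul hKpos.le G0] at h2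
    have b2 : cstar * E t ≤ Real.sqrt G0 * Real.sqrt (E 0) := by
      have h1 : cstar * E t ≤ cstar * E 0 :=
        mul_le_mul_of_nonneg_left (hEt0 t htIcc) hcs0.le
      have h2 : cstar * E 0 = (cstar * Real.sqrt (E 0)) * Real.sqrt (E 0) := by
        rw [mul_assoc, Real.mul_self_sqrt hE0pos.le]
      have h3 : (cstar * Real.sqrt (E 0)) * Real.sqrt (E 0)
          ≤ Real.sqrt G0 * Real.sqrt (E 0) :=
        mul_le_mul_of_nonneg_right hcst (Real.sqrt_nonneg _)
      linarith
    have hcoef3 : C₁*(Real.sqrt K + 1) ≤ C₂ := by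
      rw [hC₂def]; linarith [hp2, hp3, hp4, hp5, hK₁pos, hKpos]
    calc (c t)^2 ≤ C₁*(Real.sqrt (H t * E t) + cstar*E t) := halgc t htIcc
      _ ≤ C₁*(Real.sqrt K*Real.sqrt G0*Real.sqrt (E 0) + Real.sqrt G0*Real.sqrt (E 0)) := by
          apply mul_le_mul_of_nonneg_left (add_le_add b1 b2) hC₁.le
      _ = (C₁*(Real.sqrt K + 1))*(Real.sqrt G0*Real.sqrt (E 0)) := by ring
      _ ≤ C₂*(Real.sqrt G0*Real.sqrt (E 0)) :=
          mul_le_mul_of_nonneg_right hcoef3 (by positivity)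
      _ = C₂*Real.sqrt G0*Real.sqrt (E 0) := by ring
  -- (iv)
  have htsq : 0 < Real.sqrt t := Real.sqrt_pos.mpr htpos
  have hEt2 : E t ≤ K₁*G0/t := by rw [le_div_iff₀ htpos]; exact hEtt
  have hrwt : t ^ (-(1:ℝ)/2) = (Real.sqrt t)⁻¹ := by
    rw [show (-(1:ℝ)/2) = -((1:ℝ)/2) from by ring, Real.rpow_neg htpos.le,
      ← Real.sqrt_eq_rpow]
  have g4 : (c t)^2 ≤ C₂*G0*t^(-(1:ℝ)/2) := by
    have b1 : Real.sqrt (H t * E t) ≤ Real.sqrt (K*K₁)*G0/Real.sqrt t := by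
      have h1 : H t * E t ≤ (K*G0)*(K₁*G0/t) :=
        mul_le_mul (hHK t htIcc) hEt2 hEt.le (by positivity)
      rw [show (K*G0)*(K₁*G0/t) = (K*K₁)*G0^2/t from by ring] at h1
      have h3 := Real.sqrt_le_sqrt h1
      rwa [Real.sqrt_div (by positivity : (0:ℝ) ≤ (K*K₁)*G0^2) t,
        Real.sqrt_mul (by positivity : (0:ℝ) ≤ K*K₁) (G0^2),
        Real.sqrt_sq hG0pos.le] at h3
    have b2 : cstar * E t ≤ Real.sqrt K₁*G0/Real.sqrt t := by
      have h3 : cstar^2*E t ≤ G0 := by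
        calc cstar^2*E t ≤ cstar^2*E 0 :=
              mul_le_mul_of_nonneg_left (hEt0 t htIcc) (sq_nonneg cstar)
          _ ≤ G0 := hcsE0
      have h1 : (cstar*E t)^2 ≤ K₁*G0^2/t := by
        have h4 : (cstar^2*E t)*E t ≤ G0*(K₁*G0/t) :=
          mul_le_mul h3 hEt2 hEt.le hG0pos.le
        calc (cstar*E t)^2 = (cstar^2*E t)*E t := by ring
          _ ≤ G0*(K₁*G0/t) := h4
          _ = K₁*G0^2/t := by ring
      have h5 : cstar*E t = Real.sqrt ((cstar*E t)^2) :=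
        (Real.sqrt_sq (by positivity)).symm
      rw [h5]
      have h6 := Real.sqrt_le_sqrt h1
      rwa [Real.sqrt_div (by positivity : (0:ℝ) ≤ K₁*G0^2) t,
        Real.sqrt_mul hK₁pos.le (G0^2), Real.sqrt_sq hG0pos.le] at h6
    have hcoef4 : C₁*(Real.sqrt (K*K₁) + Real.sqrt K₁) ≤ C₂ := by
      rw [hC₂def]; linarith [hp1, hp3, hp4, hp5, hK₁pos, hKpos]
    calc (c t)^2 ≤ C₁*(Real.sqrt (H t * E t) + cstar*E t) := halgc t htIcc
      _ ≤ C₁*(Real.sqrt (K*K₁)*G0/Real.sqrt t + Real.sqrt K₁*G0/Real.sqrt t) := by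
          apply mul_le_mul_of_nonneg_left (add_le_add b1 b2) hC₁.le
      _ = (C₁*(Real.sqrt (K*K₁) + Real.sqrt K₁))*G0*(Real.sqrt t)⁻¹ := by ring
      _ ≤ C₂*G0*(Real.sqrt t)⁻¹ := by
          apply mul_le_mul_of_nonneg_right
            (mul_le_mul_of_nonneg_right hcoef4 hG0pos.le) (by positivity)
      _ = C₂*G0*t^(-(1:ℝ)/2) := by rw [hrwt]
  -- (v)
  have g5 : H t ≤ C₂*G0 := by
    calc H t ≤ K*G0 := hHK t htIcc
      _ ≤ C₂*G0 := mul_le_mul_of_nonneg_right hKC₂ hG0pos.le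
  -- (vi)
  have ht2pos : 0 < t/2 := by linarith
  have ht2le : t/2 ≤ t := by linarith
  have hsubt : Set.Icc (t/2) t ⊆ Set.Icc (0:ℝ) tstar := fun τ hτ =>
    ⟨le_trans ht2pos.le hτ.1, le_trans hτ.2 ht.2⟩
  have huIcc : Set.uIcc (t/2) t = Set.Icc (t/2) t := Set.uIcc_of_le ht2le
  have hDInt : IntervalIntegrable D MeasureTheory.volume (t/2) t := by
    apply ContinuousOn.intervalIntegrable
    rw [huIcc]; exact hDcont.mono hsubt
  have hFTC : ∫ τ in (t/2)..t, -(D τ) = E t - E (t/2) := by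
    apply intervalIntegral.integral_eq_sub_of_hasDerivAt
    · intro x hx
      rw [huIcc] at hx
      exact hEd x (hsubt hx)
    · apply ContinuousOn.intervalIntegrable
      rw [huIcc]
      exact (hDcont.mono hsubt).neg
  have hIntD : ∫ τ in (t/2)..t, D τ = E (t/2) - E t := by
    rw [intervalIntegral.integral_neg] at hFTC
    linarith
  have hEhalf : E (t/2)*(t/2) ≤ K₁*G0 := hEdec (t/2) (hsubt ⟨le_refl _, ht2le⟩)
  have hEhalf' : E (t/2) ≤ 2*K₁*G0/t := by
    rw [le_div_iff₀ htpos]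
    have e : E (t/2)*t = 2*(E (t/2)*(t/2)) := by ring
    rw [e]
    linarith
  have hB : ∃ s ∈ Set.Icc (t/2) t, D s ≤ 4*K₁*G0/t^2 := by
    by_contra hcon2
    push_neg at hcon2
    have hge : ∀ τ ∈ Set.Icc (t/2) t, 4*K₁*G0/t^2 ≤ D τ := fun τ hτ => (hcon2 τ hτ).le
    have h1 := intervalIntegral.integral_mono_on ht2le intervalIntegrable_const hDInt hge
    rw [intervalIntegral.integral_const, hIntD, smul_eq_mul] at h1
    have e1 : (t - t/2)*(4*K₁*G0/t^2) = 2*K₁*G0/t := by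
      field_simp
      ring
    rw [e1] at h1
    have hEhp := (hpos (t/2) (hsubt ⟨le_refl _, ht2le⟩)).1
    linarith
  obtain ⟨s, hsmem, hsB⟩ := hB
  have hsub2 : Set.Icc s t ⊆ Set.Icc (0:ℝ) tstar := fun τ hτ =>
    hsubt ⟨le_trans hsmem.1 hτ.1, hτ.2⟩
  obtain ⟨m, hm, hmax⟩ := isCompact_Icc.exists_isMaxOn
    (⟨t, hsmem.2, le_refl t⟩ : (Set.Icc s t).Nonempty) (hDcont.mono hsub2)
  have hmIcc : m ∈ Set.Icc (0:ℝ) tstar := hsub2 hm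
  have hSmpos : 0 < D m := (hpos m hmIcc).2.1
  have hDleS : ∀ τ ∈ Set.Icc s t, D τ ≤ D m := fun τ hτ => hmax hτ
  set co := C₁*((D m)^((1:ℝ)/2) + (E 0)^(1-θ)*(D m)^θ) with hcodef
  clear_value co
  have hco0 : 0 ≤ co := by
    rw [hcodef]
    positivity
  have hVd : ∀ τ ∈ Set.Icc s m, HasDerivAt (fun τ => D τ + co*E τ)
      (D' τ + co*(-(D τ))) τ := by
    intro τ hτ
    have hτ' : τ ∈ Set.Icc (0:ℝ) tstar := hsub2 ⟨hτ.1, le_trans hτ.2 hm.2⟩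
    exact (hDd τ hτ').add ((hEd τ hτ').const_mul co)
  have hV'le : ∀ τ ∈ Set.Ioo s m, D' τ + co*(-(D τ)) ≤ 0 := by
    intro τ hτ
    have hτicc : τ ∈ Set.Icc s t := ⟨hτ.1.le, le_trans hτ.2.le hm.2⟩
    have hτ' : τ ∈ Set.Icc (0:ℝ) tstar := hsub2 hτicc
    obtain ⟨hEτ, hDτ, hh1, hh2⟩ := hpos τ hτ'
    have h1 : D' τ ≤ C₁*((D τ)^((3:ℝ)/2) + (E τ)^(1-θ)*(D τ)^(1+θ)) := hD'le τ hτ'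
    have h2 : (D τ)^((3:ℝ)/2) ≤ (D m)^((1:ℝ)/2)*(D τ) := by
      have e1 : (D τ)^((3:ℝ)/2) = (D τ)^((1:ℝ)/2)*(D τ) := by
        rw [show (3:ℝ)/2 = (1:ℝ)/2 + 1 from by norm_num, Real.rpow_add hDτ,
          Real.rpow_one]
      rw [e1]
      exact mul_le_mul_of_nonneg_right
        (Real.rpow_le_rpow hDτ.le (hDleS τ hτicc) (by norm_num)) hDτ.le
    have h3 : (E τ)^(1-θ)*(D τ)^(1+θ) ≤ ((E 0)^(1-θ)*(D m)^θ)*(D τ) := by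
      have e1 : (D τ)^((1:ℝ)+θ) = (D τ)^θ*(D τ) := by
        rw [Real.rpow_add hDτ, Real.rpow_one]; ring
      have h3a : (E τ)^(1-θ) ≤ (E 0)^(1-θ) :=
        Real.rpow_le_rpow hEτ.le (hEt0 τ hτ') (by linarith)
      have h3b : (D τ)^θ ≤ (D m)^θ :=
        Real.rpow_le_rpow hDτ.le (hDleS τ hτicc) hθpos.le
      calc (E τ)^(1-θ)*(D τ)^(1+θ) = ((E τ)^(1-θ)*(D τ)^θ)*(D τ) := by
            rw [show (1:ℝ)+θ = ((1:ℝ)+θ) from rfl] at e1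
            rw [e1]; ring
        _ ≤ ((E 0)^(1-θ)*(D m)^θ)*(D τ) := by
            apply mul_le_mul_of_nonneg_right _ hDτ.le
            exact mul_le_mul h3a h3b (by positivity) (by positivity)
    have h4 : C₁*((D τ)^((3:ℝ)/2) + (E τ)^(1-θ)*(D τ)^(1+θ)) ≤ co*(D τ) := by
      rw [hcodef]
      calc C₁*((D τ)^((3:ℝ)/2) + (E τ)^(1-θ)*(D τ)^(1+θ))
          ≤ C₁*((D m)^((1:ℝ)/2)*(D τ) + ((E 0)^(1-θ)*(D m)^θ)*(D τ)) := by
            apply mul_le_mul_of_nonneg_left (add_le_add h2 h3) hC₁.le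
        _ = C₁*((D m)^((1:ℝ)/2) + (E 0)^(1-θ)*(D m)^θ)*(D τ) := by ring
    linarith
  have hanti2 : D m + co*E m ≤ D s + co*E s :=
    OdeLemmaAux.anti_of_deriv hVd hV'le
      (Set.left_mem_Icc.mpr hm.1) (Set.right_mem_Icc.mpr hm.1) hm.1
  have hEmpos := (hpos m hmIcc).1
  have hEsle : E s ≤ 2*K₁*G0/t := by
    have h1 : E s ≤ E (t/2) := hEanti (hsubt ⟨le_refl _, ht2le⟩) (hsubt hsmem) hsmem.1
    linarith
  have hSle : D m ≤ 4*K₁*G0/t^2 + co*(2*K₁*G0/t) := by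
    have h2 : co*E s ≤ co*(2*K₁*G0/t) := mul_le_mul_of_nonneg_left hEsle hco0
    have h3 : 0 ≤ co*E m := mul_nonneg hco0 hEmpos.le
    linarith
  set a := 2*C₁*K₁*G0/t with hadef
  clear_value a
  have hapos : 0 < a := by rw [hadef]; positivity
  have hcoS : co*(2*K₁*G0/t) = a*(D m)^((1:ℝ)/2) + a*((E 0)^(1-θ)*(D m)^θ) := by
    rw [hcodef, hadef]
    field_simp
  have hu : ((D m)^((1:ℝ)/2))^2 = D m := by
    rw [← Real.rpow_natCast ((D m)^((1:ℝ)/2)) 2, ← Real.rpow_mul hSmpos.le]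
    norm_num
  have hy1 : a*(D m)^((1:ℝ)/2) ≤ (D m)/4 + a^2 :=
    OdeLemmaAux.young_half ((D m)^((1:ℝ)/2)) a (D m) hu
  have hy2 : a*((E 0)^(1-θ)*(D m)^θ) ≤ (D m)/8 + 32768*(a^((1:ℝ)/(1-θ)))*(E 0) :=
    OdeLemmaAux.young_theta θ a (E 0) (D m) hθ1 hθ2 hapos hE0pos hSmpos
  have harE0nn : (0:ℝ) ≤ a^((1:ℝ)/(1-θ))*(E 0) := by positivity
  have hSfinal : D m ≤ 2*(4*K₁*G0/t^2) + 2*a^2 + 65536*(a^((1:ℝ)/(1-θ)))*(E 0) := by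
    rw [hcoS] at hSle
    linarith
  -- exponent bookkeeping
  have hd6pos : (0:ℝ) < 6 - (d':ℝ) := by linarith
  have hd6ne : (6:ℝ) - (d':ℝ) ≠ 0 := ne_of_gt hd6pos
  have hr_eq : (1:ℝ)/(1-θ) = 6/(6-(d':ℝ)) := by
    rw [hθdef, show (1:ℝ) - (d':ℝ)/6 = (6-(d':ℝ))/6 from by ring, one_div_div]
  have hr0' : (0:ℝ) ≤ (1:ℝ)/(1-θ) := by positivity
  have hr6' : (1:ℝ)/(1-θ) ≤ 6 := by rw [div_le_iff₀ h1θ]; linarith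
  have hexp1 : -((1:ℝ)/(1-θ)) = -(2*(d':ℝ)-6)/(6-(d':ℝ)) + -(2:ℝ) := by
    rw [hr_eq]
    field_simp
    ring
  have htexp : t^(-((1:ℝ)/(1-θ)))
      = t^(-(2*(d':ℝ)-6)/(6-(d':ℝ))) * (t^2)⁻¹ := by
    rw [hexp1, Real.rpow_add htpos]
    congr 1
    rw [show (-(2:ℝ)) = -((2:ℕ):ℝ) from by norm_num, Real.rpow_neg htpos.le,
      Real.rpow_natCast]
  have hG0r : G0^((1:ℝ)/(1-θ)) = G0^((6:ℝ)/(6-(d':ℝ))) := by rw [hr_eq]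
  have hbpos : (0:ℝ) < 2*C₁*K₁ := by positivity
  have harpow : a^((1:ℝ)/(1-θ))
      ≤ (1+2*C₁*K₁)^6 * (G0^((1:ℝ)/(1-θ)) * t^(-((1:ℝ)/(1-θ)))) := by
    have e1 : a = (2*C₁*K₁)*G0/t := by rw [hadef]
    rw [e1]
    exact OdeLemmaAux.apow_split (2*C₁*K₁) G0 t _ hbpos hG0pos htpos hr0' hr6'
  have hXnn : (0:ℝ) ≤ E 0*G0^((6:ℝ)/(6-(d':ℝ)))*t^(-(2*(d':ℝ)-6)/(6-(d':ℝ))) := by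
    positivity
  have hC₂b1 : 8*K₁ ≤ C₂ := by rw [hC₂def]; linarith [hp1, hp2, hp4, hp5, hKpos, hK₁pos]
  have hC₂b2 : 8*C₁^2*K₁^2 ≤ C₂ := by
    rw [hC₂def]; linarith [hp1, hp2, hp3, hp5, hKpos, hK₁pos]
  have hC₂b3 : 65536*(1+2*C₁*K₁)^6 ≤ C₂ := by
    rw [hC₂def]; linarith [hp1, hp2, hp3, hp4, hKpos, hK₁pos]
  have htp2 : (0:ℝ) < t^2 := by positivity
  have h3a : 65536*(a^((1:ℝ)/(1-θ)))*(E 0)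
      ≤ C₂*(E 0*G0^((6:ℝ)/(6-(d':ℝ)))*t^(-(2*(d':ℝ)-6)/(6-(d':ℝ))))/t^2 := by
    calc 65536*(a^((1:ℝ)/(1-θ)))*(E 0)
        ≤ 65536*((1+2*C₁*K₁)^6*(G0^((1:ℝ)/(1-θ))*t^(-((1:ℝ)/(1-θ)))))*(E 0) := by
          apply mul_le_mul_of_nonneg_right
            (mul_le_mul_of_nonneg_left harpow (by norm_num)) hE0pos.le
      _ = (65536*(1+2*C₁*K₁)^6)
            *(E 0*G0^((6:ℝ)/(6-(d':ℝ)))*t^(-(2*(d':ℝ)-6)/(6-(d':ℝ))))/t^2 := by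
          rw [htexp, hG0r]; ring
      _ ≤ C₂*(E 0*G0^((6:ℝ)/(6-(d':ℝ)))*t^(-(2*(d':ℝ)-6)/(6-(d':ℝ))))/t^2 := by
          exact div_le_div_of_nonneg_right
            (mul_le_mul_of_nonneg_right hC₂b3 hXnn) htp2.le
  have htne : t ≠ 0 := ne_of_gt htpos
  have g6 : D t ≤ C₂*(G0 + G0^2
      + E 0*G0^((6:ℝ)/(6-(d':ℝ)))*t^(-(2*(d':ℝ)-6)/(6-(d':ℝ))))/t^2 := by
    have q2 : 8*K₁*G0/t^2 ≤ C₂*G0/t^2 :=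
      div_le_div_of_nonneg_right (mul_le_mul_of_nonneg_right hC₂b1 hG0pos.le) htp2.le
    have q3 : 8*C₁^2*K₁^2*G0^2/t^2 ≤ C₂*G0^2/t^2 := by
      apply div_le_div_of_nonneg_right _ htp2.le
      have h := mul_le_mul_of_nonneg_right hC₂b2 (sq_nonneg G0)
      linarith
    have h2a : 2*a^2 = 8*C₁^2*K₁^2*G0^2/t^2 := by
      rw [hadef]
      field_simp
      ring
    have e2B : 2*(4*K₁*G0/t^2) = 8*K₁*G0/t^2 := by ring
    calc D t ≤ D m := hDleS t ⟨hsmem.2, le_refl t⟩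
      _ ≤ 2*(4*K₁*G0/t^2) + 2*a^2 + 65536*(a^((1:ℝ)/(1-θ)))*(E 0) := hSfinal
      _ ≤ C₂*G0/t^2 + C₂*G0^2/t^2
          + C₂*(E 0*G0^((6:ℝ)/(6-(d':ℝ)))*t^(-(2*(d':ℝ)-6)/(6-(d':ℝ))))/t^2 := by
          rw [e2B, h2a]
          linarith [q2, q3, h3a]
      _ = C₂*(G0 + G0^2
          + E 0*G0^((6:ℝ)/(6-(d':ℝ)))*t^(-(2*(d':ℝ)-6)/(6-(d':ℝ))))/t^2 := by ring
  exact ⟨g1, g2, g3, g4, g5, g6⟩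
end
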